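/- arXiv:0811.3134 — 7 statements merged into one kernel-verified Lean document; each statement's English description precedes it below -/
import Mathlib

section
/- Under the standing hypotheses on κ and a, for every integer m ≥ 1 there exists a constant C (depending on m, a, κ) such that for every n ≥ 1 and every x ∈ ℝ²: ‖iteratedFDeriv ℝ m (a ∘ κ^[n]) x‖ ≤ C e^{n m Γ}. -/
open scoped BigOperators

open Function Set

section FDB

variable {E F G : Type*} [NormedAddCommGroup E] [NormedSpace ℝ E]
  [NormedAddCommGroup F] [NormedSpace ℝ F] [NormedAddCommGroup G] [NormedSpace ℝ G]

lemma aux_norm_compAlong {n : ℕ} (c : OrderedFinpartition n)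
    (f : ContinuousMultilinearMap ℝ (fun _ : Fin c.length ↦ F) G)
    (p : ∀ i : Fin c.length, ContinuousMultilinearMap ℝ (fun _ : Fin (c.partSize i) ↦ E) F) :
    ‖c.compAlongOrderedFinpartition f p‖ ≤ ‖f‖ * ∏ m, ‖p m‖ := by
  apply ContinuousMultilinearMap.opNorm_le_bound (by positivity) (fun v ↦ ?_)
  simp only [OrderedFinpartition.compAlongOrderFinpartition_apply]
  apply (f.le_opNorm _).trans
  rw [mul_assoc, ← c.prod_sigma_eq_prod, ← Finset.prod_mul_distrib]
  gcongr with m _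
  exact (p m).le_opNorm _

lemma aux_fdb {g : F → G} {f : E → F} (hg : ContDiff ℝ (⊤ : ℕ∞) g)
    (hf : ContDiff ℝ (⊤ : ℕ∞) f) (i : ℕ) (x : E) :
    ‖iteratedFDeriv ℝ i (g ∘ f) x‖ ≤ ∑ c : OrderedFinpartition i,
      ‖iteratedFDeriv ℝ c.length g (f x)‖ * ∏ j, ‖iteratedFDeriv ℝ (c.partSize j) f x‖ := by
  have hq : HasFTaylorSeriesUpTo (⊤ : ℕ∞) g (ftaylorSeries ℝ g) :=
    contDiff_iff_ftaylorSeries.mp (hg.of_le (by simp))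
  have hp : HasFTaylorSeriesUpTo (⊤ : ℕ∞) f (ftaylorSeries ℝ f) :=
    contDiff_iff_ftaylorSeries.mp (hf.of_le (by simp))
  have hcomp : HasFTaylorSeriesUpToOn ((⊤:ℕ∞) : WithTop ℕ∞) (g ∘ f)
      (fun y ↦ (ftaylorSeries ℝ g (f y)).taylorComp (ftaylorSeries ℝ f y)) univ :=
    HasFTaylorSeriesUpToOn.comp (hasFTaylorSeriesUpToOn_univ_iff.2 hq)
      (hasFTaylorSeriesUpToOn_univ_iff.2 hp) (mapsTo_univ _ _)
  have heq := (hasFTaylorSeriesUpToOn_univ_iff.1 hcomp).eq_iteratedFDeriv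
    (m := i) (by exact_mod_cast le_top) x
  rw [← heq]
  refine (norm_sum_le _ _).trans (Finset.sum_le_sum fun c _ ↦ ?_)
  exact aux_norm_compAlong c _ _

lemma norm_iteratedFDeriv_one_eq (f : E → F) (x : E) :
    ‖iteratedFDeriv ℝ 1 f x‖ = ‖fderiv ℝ f x‖ := by
  rw [← norm_iteratedFDeriv_fderiv (n := 0), norm_iteratedFDeriv_zero]

end FDB

namespace OrderedFinpartition

variable {m : ℕ}

lemma emb_surj_of_length_one (c : OrderedFinpartition m) (h : c.length = 1)
    (j : Fin c.length) : Function.Surjective (c.emb j) := by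
  intro x
  obtain ⟨k, r, hr⟩ : ∃ k, x ∈ range (c.emb k) := c.cover x
  have hk : k = j := by
    have h1 := k.2; have h2 := j.2
    ext
    omega
  subst hk
  exact ⟨r, hr⟩

lemma partSize_eq_of_length_one (c : OrderedFinpartition m) (h : c.length = 1)
    (j : Fin c.length) : c.partSize j = m := by
  have hbij : Function.Bijective (c.emb j) :=
    ⟨(c.emb_strictMono j).injective, c.emb_surj_of_length_one h j⟩
  simpa using Fintype.card_of_bijective hbij

lemma eq_of_length_one {c c' : OrderedFinpartition m} (h : c.length = 1)
    (h' : c'.length = 1) : c = c' := by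
  obtain ⟨l, ps, pos, emb, smono, pmono, disj, cov⟩ := c
  obtain ⟨l', ps', pos', emb', smono', pmono', disj', cov'⟩ := c'
  dsimp only at h h'
  subst h
  subst h'
  have hps : ps = ps' := by
    funext j
    have e1 : ps j = m :=
      partSize_eq_of_length_one ⟨1, ps, pos, emb, smono, pmono, disj, cov⟩ rfl j
    have e2 : ps' j = m :=
      partSize_eq_of_length_one ⟨1, ps', pos', emb', smono', pmono', disj', cov'⟩ rfl j
    exact e1.trans e2.symm
  subst hps
  have hemb : emb = emb' := by
    funext j
    have hs1 : Function.Surjective (emb j) :=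
      emb_surj_of_length_one ⟨1, ps, pos, emb, smono, pmono, disj, cov⟩ rfl j
    have hs2 : Function.Surjective (emb' j) :=
      emb_surj_of_length_one ⟨1, ps, pos', emb', smono', pmono', disj', cov'⟩ rfl j
    have hr1 : Set.range (emb j) = Set.univ := Function.Surjective.range_eq hs1
    have hr2 : Set.range (emb' j) = Set.univ := Function.Surjective.range_eq hs2
    exact ((smono j).range_inj (smono' j)).1 (hr1.trans hr2.symm)
  subst hemb
  rfl

lemma sum_partSize (c : OrderedFinpartition m) : ∑ j, c.partSize j = m := by
  simpa using c.sum_sigma_eq_sum (fun _ => (1 : ℕ))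

lemma partSize_lt (c : OrderedFinpartition m) (hc : c.length ≠ 1) (hm : 1 ≤ m)
    (j : Fin c.length) : c.partSize j < m := by
  have h2 : 2 ≤ c.length := by
    have := c.length_pos (by omega)
    omega
  have hsum := c.sum_partSize
  have hcard : 1 ≤ (Finset.univ.erase j).card := by
    rw [Finset.card_erase_of_mem (Finset.mem_univ _)]
    simp only [Finset.card_univ, Fintype.card_fin]
    omega
  have h3 : (Finset.univ.erase j).card ≤ ∑ k ∈ Finset.univ.erase j, c.partSize k := by
    have := Finset.card_nsmul_le_sum (Finset.univ.erase j) c.partSize 1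
      (fun k _ => c.partSize_pos k)
    simpa using this
  have key : c.partSize j + ∑ k ∈ Finset.univ.erase j, c.partSize k = m := by
    rw [Finset.add_sum_erase Finset.univ c.partSize (Finset.mem_univ j)]
    exact hsum
  omega

end OrderedFinpartition

section Iterates

lemma prod_DD_exp {m : ℕ} (c : OrderedFinpartition m) (n : ℕ) (Γ DD : ℝ) :
    (∏ j : Fin c.length, (DD * Real.exp (n * (c.partSize j) * Γ))) =
      DD ^ c.length * Real.exp (n * m * Γ) := by
  rw [Finset.prod_mul_distrib, Finset.prod_const, ← Real.exp_sum]
  have hsum : (∑ j, (c.partSize j : ℝ)) = m := by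
    rw [← Nat.cast_sum, c.sum_partSize]
  have hs : ∑ j : Fin c.length, ((n : ℝ) * (c.partSize j) * Γ) = n * m * Γ := by
    rw [← Finset.sum_mul, ← Finset.mul_sum, hsum]
  rw [hs]
  congr 2
  simp

variable {κ : ℝ × ℝ → ℝ × ℝ}

lemma contDiff_iter (hκ : ContDiff ℝ (⊤ : ℕ∞) κ) (n : ℕ) : ContDiff ℝ (⊤ : ℕ∞) (κ^[n]) := by
  induction n with
  | zero => simpa using contDiff_id
  | succ n ih => rw [Function.iterate_succ']; exact hκ.comp ih

lemma fderiv_iter_le {Γ : ℝ} (hκ : ContDiff ℝ (⊤ : ℕ∞) κ)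
    (hκ1 : ∀ x, ‖fderiv ℝ κ x‖ ≤ Real.exp Γ) (n : ℕ) (x : ℝ × ℝ) :
    ‖fderiv ℝ (κ^[n]) x‖ ≤ Real.exp (n * Γ) := by
  induction n generalizing x with
  | zero =>
    simp only [Function.iterate_zero, fderiv_id, Nat.cast_zero, zero_mul, Real.exp_zero]
    exact ContinuousLinearMap.norm_id_le
  | succ n ih =>
    rw [Function.iterate_succ']
    rw [fderiv_comp x (hκ.differentiable (by simp) _)
      (((contDiff_iter hκ n).differentiable (by simp)) _)]
    calc ‖(fderiv ℝ κ (κ^[n] x)).comp (fderiv ℝ (κ^[n]) x)‖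
        ≤ ‖fderiv ℝ κ (κ^[n] x)‖ * ‖fderiv ℝ (κ^[n]) x‖ :=
          ContinuousLinearMap.opNorm_comp_le _ _
      _ ≤ Real.exp Γ * Real.exp (n * Γ) :=
          mul_le_mul (hκ1 _) (ih x) (norm_nonneg _) (Real.exp_nonneg _)
      _ = Real.exp ((n + 1 : ℕ) * Γ) := by
          rw [← Real.exp_add]; push_cast; ring_nf

lemma iter_deriv_bound (Γ : ℝ) (hΓ : 0 < Γ) (hκ : ContDiff ℝ (⊤ : ℕ∞) κ)
    (hκ1 : ∀ x, ‖fderiv ℝ κ x‖ ≤ Real.exp Γ)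
    (hκk : ∀ k : ℕ, 2 ≤ k → ∃ B : ℝ, ∀ x, ‖iteratedFDeriv ℝ k κ x‖ ≤ B) (i : ℕ) :
    ∃ D : ℝ, 1 ≤ D ∧ ∀ j : ℕ, 1 ≤ j → j ≤ i → ∀ n : ℕ, 1 ≤ n → ∀ x,
      ‖iteratedFDeriv ℝ j (κ^[n]) x‖ ≤ D * Real.exp (n * j * Γ) := by
  classical
  induction i with
  | zero => exact ⟨1, le_rfl, fun j hj hji => by omega⟩
  | succ i ih =>
    obtain ⟨D, hD1, hD⟩ := ih
    by_cases hi0 : i = 0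
    · subst hi0
      refine ⟨1, le_rfl, fun j hj hji n hn x => ?_⟩
      have hj1 : j = 1 := by omega
      subst hj1
      rw [norm_iteratedFDeriv_one_eq, one_mul]
      have := fderiv_iter_le hκ hκ1 n x
      simpa using this
    · set m := i + 1 with hm
      have hm2 : 2 ≤ m := by omega
      obtain ⟨B, hB⟩ := hκk m hm2
      have hB0 : 0 ≤ B := le_trans (norm_nonneg _) (hB 0)
      set Bf : ℕ → ℝ := fun k => if h : 2 ≤ k then (hκk k h).choose else Real.exp Γ with hBfdef
      have hBf : ∀ k, 1 ≤ k → ∀ y, ‖iteratedFDeriv ℝ k κ y‖ ≤ Bf k := by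
        intro k hk y
        by_cases h2 : 2 ≤ k
        · simp only [hBfdef, dif_pos h2]
          exact (hκk k h2).choose_spec y
        · have hk1 : k = 1 := by omega
          subst hk1
          simp only [hBfdef, dif_neg h2]
          rw [norm_iteratedFDeriv_one_eq]
          exact hκ1 y
      have hBf0 : ∀ k, 1 ≤ k → 0 ≤ Bf k := fun k hk => (norm_nonneg _).trans (hBf k hk 0)
      set Q : ℝ := ∑ k ∈ Finset.Icc 1 m, Bf k with hQdef
      have hQ : ∀ k, 1 ≤ k → k ≤ m → Bf k ≤ Q := fun k h1 h2 =>
        Finset.single_le_sum (fun k hk => hBf0 k (Finset.mem_Icc.1 hk).1)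
          (Finset.mem_Icc.2 ⟨h1, h2⟩)
      have hQ0 : 0 ≤ Q :=
        Finset.sum_nonneg (fun k hk => hBf0 k (Finset.mem_Icc.1 hk).1)
      set N : ℝ := (Fintype.card (OrderedFinpartition m) : ℝ) with hNdef
      have hN0 : 0 ≤ N := Nat.cast_nonneg _
      set K : ℝ := N * (Q * D ^ m) with hKdef
      have hK0 : 0 ≤ K := by positivity
      have hDm0 : (0:ℝ) ≤ D ^ m := by positivity
      -- the key recursion
      have hrec : ∀ n : ℕ, 1 ≤ n → ∀ x,
          ‖iteratedFDeriv ℝ m (κ^[n + 1]) x‖ ≤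
            Real.exp Γ * ‖iteratedFDeriv ℝ m (κ^[n]) x‖ + K * Real.exp (n * m * Γ) := by
        intro n hn x
        rw [Function.iterate_succ']
        refine (aux_fdb hκ (contDiff_iter hκ n) m x).trans ?_
        rw [← Finset.sum_filter_add_sum_filter_not Finset.univ
          (fun c : OrderedFinpartition m => c.length = 1)]
        have hgood : ∑ c ∈ Finset.univ.filter (fun c : OrderedFinpartition m => c.length = 1),
            ‖iteratedFDeriv ℝ c.length κ (κ^[n] x)‖ *
              ∏ j, ‖iteratedFDeriv ℝ (c.partSize j) (κ^[n]) x‖ ≤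
            Real.exp Γ * ‖iteratedFDeriv ℝ m (κ^[n]) x‖ := by
          have hterm : ∀ c ∈ Finset.univ.filter (fun c : OrderedFinpartition m => c.length = 1),
              ‖iteratedFDeriv ℝ c.length κ (κ^[n] x)‖ *
                ∏ j, ‖iteratedFDeriv ℝ (c.partSize j) (κ^[n]) x‖ ≤
              Real.exp Γ * ‖iteratedFDeriv ℝ m (κ^[n]) x‖ := by
            intro c hc
            have hl : c.length = 1 := (Finset.mem_filter.1 hc).2
            have e2 : ∏ j, ‖iteratedFDeriv ℝ (c.partSize j) (κ^[n]) x‖ =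
                ‖iteratedFDeriv ℝ m (κ^[n]) x‖ := by
              rw [Finset.prod_congr rfl (fun j _ => by
                rw [c.partSize_eq_of_length_one hl j]), Finset.prod_const,
                Finset.card_univ, Fintype.card_fin, hl, pow_one]
            have e1 : ‖iteratedFDeriv ℝ c.length κ (κ^[n] x)‖ ≤ Real.exp Γ := by
              rw [hl, norm_iteratedFDeriv_one_eq]
              exact hκ1 _
            rw [e2]
            exact mul_le_mul_of_nonneg_right e1 (norm_nonneg _)
          have hcard : (Finset.univ.filter
              (fun c : OrderedFinpartition m => c.length = 1)).card ≤ 1 :=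
            Finset.card_le_one.2 (fun a ha b hb =>
              OrderedFinpartition.eq_of_length_one (Finset.mem_filter.1 ha).2
                (Finset.mem_filter.1 hb).2)
          refine (Finset.sum_le_card_nsmul _ _ _ hterm).trans ?_
          rw [nsmul_eq_mul]
          refine mul_le_of_le_one_left (by positivity) ?_
          exact_mod_cast hcard
        have hbad : ∑ c ∈ Finset.univ.filter (fun c : OrderedFinpartition m => ¬c.length = 1),
            ‖iteratedFDeriv ℝ c.length κ (κ^[n] x)‖ *
              ∏ j, ‖iteratedFDeriv ℝ (c.partSize j) (κ^[n]) x‖ ≤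
            K * Real.exp (n * m * Γ) := by
          have hterm : ∀ c ∈ Finset.univ.filter
              (fun c : OrderedFinpartition m => ¬c.length = 1),
              ‖iteratedFDeriv ℝ c.length κ (κ^[n] x)‖ *
                ∏ j, ‖iteratedFDeriv ℝ (c.partSize j) (κ^[n]) x‖ ≤
              Q * (D ^ m * Real.exp (n * m * Γ)) := by
            intro c hc
            have hl : ¬c.length = 1 := (Finset.mem_filter.1 hc).2
            have hlen1 : 1 ≤ c.length := c.length_pos (by omega)
            have e1 : ‖iteratedFDeriv ℝ c.length κ (κ^[n] x)‖ ≤ Q :=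
              (hBf c.length hlen1 _).trans (hQ c.length hlen1 c.length_le)
            have e2 : ∏ j, ‖iteratedFDeriv ℝ (c.partSize j) (κ^[n]) x‖ ≤
                D ^ m * Real.exp (n * m * Γ) := by
              calc ∏ j, ‖iteratedFDeriv ℝ (c.partSize j) (κ^[n]) x‖
                  ≤ ∏ j : Fin c.length, (D * Real.exp (n * (c.partSize j) * Γ)) := by
                    refine Finset.prod_le_prod (fun j _ => norm_nonneg _) (fun j _ => ?_)
                    have hps := c.partSize_lt hl (by omega) j
                    exact hD (c.partSize j) (c.partSize_pos j) (by omega) n hn x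
                _ = D ^ c.length * Real.exp (n * m * Γ) := prod_DD_exp c n Γ D
                _ ≤ D ^ m * Real.exp (n * m * Γ) := by
                    have := pow_le_pow_right₀ hD1 c.length_le
                    exact mul_le_mul_of_nonneg_right this (Real.exp_nonneg _)
            exact mul_le_mul e1 e2 (Finset.prod_nonneg (fun j _ => norm_nonneg _)) hQ0
          refine (Finset.sum_le_card_nsmul _ _ _ hterm).trans ?_
          rw [nsmul_eq_mul, hKdef, hNdef]
          have hcardle : ((Finset.univ.filter
              (fun c : OrderedFinpartition m => ¬c.length = 1)).card : ℝ) ≤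
              (Fintype.card (OrderedFinpartition m) : ℝ) := by
            exact_mod_cast Finset.card_filter_le _ _
          calc ((Finset.univ.filter
              (fun c : OrderedFinpartition m => ¬c.length = 1)).card : ℝ) *
                (Q * (D ^ m * Real.exp (n * m * Γ)))
              ≤ (Fintype.card (OrderedFinpartition m) : ℝ) *
                (Q * (D ^ m * Real.exp (n * m * Γ))) := by
                refine mul_le_mul_of_nonneg_right hcardle (by positivity)
            _ = (Fintype.card (OrderedFinpartition m) : ℝ) * (Q * D ^ m) *
                Real.exp (n * m * Γ) := by ring
        exact add_le_add hgood hbad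
      -- solve the recursion
      set δ : ℝ := Real.exp (2 * Γ) - Real.exp Γ with hδdef
      have hδ : 0 < δ := by
        have : Real.exp Γ < Real.exp (2 * Γ) := Real.exp_lt_exp.2 (by linarith)
        linarith
      set C₂ : ℝ := B + K / δ with hC₂def
      have hC₂0 : 0 ≤ C₂ := by positivity
      have claim : ∀ n : ℕ, 1 ≤ n → ∀ x,
          ‖iteratedFDeriv ℝ m (κ^[n]) x‖ ≤ C₂ * Real.exp (n * m * Γ) := by
        intro n hn
        induction n, hn using Nat.le_induction with
        | base =>
          intro x
          rw [Function.iterate_one]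
          have h1 : ‖iteratedFDeriv ℝ m κ x‖ ≤ B := hB x
          have h2 : B ≤ C₂ := by
            rw [hC₂def]
            have : 0 ≤ K / δ := by positivity
            linarith
          have h3 : (1:ℝ) ≤ Real.exp ((1:ℕ) * m * Γ) := by
            apply Real.one_le_exp
            positivity
          calc ‖iteratedFDeriv ℝ m κ x‖ ≤ C₂ := h1.trans h2
            _ ≤ C₂ * Real.exp ((1:ℕ) * m * Γ) := le_mul_of_one_le_right hC₂0 h3
        | succ n hn ihn =>
          intro x
          have step := hrec n hn x
          have hcoef : Real.exp Γ * C₂ + K ≤ C₂ * Real.exp (m * Γ) := by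
            have hKle : K ≤ C₂ * (Real.exp (m * Γ) - Real.exp Γ) := by
              have hge : δ ≤ Real.exp (m * Γ) - Real.exp Γ := by
                have : Real.exp (2 * Γ) ≤ Real.exp (m * Γ) := by
                  apply Real.exp_le_exp.2
                  have : (2:ℝ) ≤ m := by exact_mod_cast hm2
                  nlinarith
                rw [hδdef]; linarith
              have h1 : K / δ ≤ C₂ := by
                rw [hC₂def]; linarith
              calc K = (K / δ) * δ := by field_simp
                _ ≤ C₂ * (Real.exp (m * Γ) - Real.exp Γ) :=
                  mul_le_mul h1 hge (le_of_lt hδ) hC₂0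
            nlinarith [Real.exp_nonneg Γ]
          have hexp : Real.exp ((n + 1 : ℕ) * m * Γ) =
              Real.exp (n * m * Γ) * Real.exp (m * Γ) := by
            rw [← Real.exp_add]
            congr 1
            push_cast
            ring
          calc ‖iteratedFDeriv ℝ m (κ^[n + 1]) x‖
              ≤ Real.exp Γ * ‖iteratedFDeriv ℝ m (κ^[n]) x‖ + K * Real.exp (n * m * Γ) := step
            _ ≤ Real.exp Γ * (C₂ * Real.exp (n * m * Γ)) + K * Real.exp (n * m * Γ) := by
                have := ihn x
                have h0 : 0 ≤ Real.exp Γ := Real.exp_nonneg _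
                nlinarith [Real.exp_nonneg ((n:ℝ) * m * Γ)]
            _ = (Real.exp Γ * C₂ + K) * Real.exp (n * m * Γ) := by ring
            _ ≤ (C₂ * Real.exp (m * Γ)) * Real.exp (n * m * Γ) :=
                mul_le_mul_of_nonneg_right hcoef (Real.exp_nonneg _)
            _ = C₂ * Real.exp ((n + 1 : ℕ) * m * Γ) := by rw [hexp]; ring
      -- combine
      refine ⟨max D C₂, le_trans hD1 (le_max_left _ _), fun j hj hji n hn x => ?_⟩
      rcases Nat.lt_or_ge j m with hjm | hjm
      · have h := hD j hj (by omega) n hn x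
        calc ‖iteratedFDeriv ℝ j (κ^[n]) x‖ ≤ D * Real.exp (n * j * Γ) := h
          _ ≤ max D C₂ * Real.exp (n * j * Γ) :=
            mul_le_mul_of_nonneg_right (le_max_left _ _) (Real.exp_nonneg _)
      · have hjm' : j = m := by omega
        rw [hjm']
        calc ‖iteratedFDeriv ℝ m (κ^[n]) x‖ ≤ C₂ * Real.exp (n * m * Γ) := claim n hn x
          _ ≤ max D C₂ * Real.exp (n * m * Γ) :=
            mul_le_mul_of_nonneg_right (le_max_right _ _) (Real.exp_nonneg _)

end Iterates

/-- Exponential growth of derivatives of iterates: if `κ : ℝ² → ℝ²` is smooth with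
`‖Dκ‖ ≤ e^Γ` everywhere and bounded higher derivatives, and `a : ℝ² → ℂ` is smooth with
bounded derivatives, then for every `m ≥ 1` there is `C` with
`‖D^m (a ∘ κⁿ)(x)‖ ≤ C e^{n m Γ}` for all `n ≥ 1` and `x`. -/
theorem iteratedFDeriv_comp_iterate_le (Γ : ℝ) (hΓ : 0 < Γ)
    (κ : ℝ × ℝ → ℝ × ℝ) (hκ : ContDiff ℝ (⊤ : ℕ∞) κ)
    (hκ1 : ∀ x, ‖fderiv ℝ κ x‖ ≤ Real.exp Γ)
    (hκk : ∀ k : ℕ, 2 ≤ k → ∃ B : ℝ, ∀ x, ‖iteratedFDeriv ℝ k κ x‖ ≤ B)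
    (a : ℝ × ℝ → ℂ) (ha : ContDiff ℝ (⊤ : ℕ∞) a)
    (hak : ∀ k : ℕ, ∃ B : ℝ, ∀ x, ‖iteratedFDeriv ℝ k a x‖ ≤ B) :
    ∀ m : ℕ, 1 ≤ m → ∃ C : ℝ,
      ∀ n : ℕ, 1 ≤ n → ∀ x : ℝ × ℝ,
        ‖iteratedFDeriv ℝ m (a ∘ κ^[n]) x‖ ≤ C * Real.exp (n * m * Γ) := by
  intro m hm
  obtain ⟨D, hD1, hD⟩ := iter_deriv_bound Γ hΓ hκ hκ1 hκk m
  choose Ba hBa using hak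
  have hBa0 : ∀ k, 0 ≤ Ba k := fun k => (norm_nonneg _).trans (hBa k 0)
  set Qa : ℝ := ∑ k ∈ Finset.range (m + 1), Ba k with hQadef
  have hQa : ∀ k, k ≤ m → Ba k ≤ Qa := fun k hk =>
    Finset.single_le_sum (fun k _ => hBa0 k) (Finset.mem_range.2 (by omega))
  have hQa0 : 0 ≤ Qa := Finset.sum_nonneg fun k _ => hBa0 k
  refine ⟨(Fintype.card (OrderedFinpartition m) : ℝ) * Qa * D ^ m, fun n hn x => ?_⟩
  refine (aux_fdb ha (contDiff_iter hκ n) m x).trans ?_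
  have hterm : ∀ c : OrderedFinpartition m, c ∈ (Finset.univ : Finset (OrderedFinpartition m)) →
      ‖iteratedFDeriv ℝ c.length a (κ^[n] x)‖ *
        ∏ j, ‖iteratedFDeriv ℝ (c.partSize j) (κ^[n]) x‖ ≤
      Qa * (D ^ m * Real.exp (n * m * Γ)) := by
    intro c _
    have e1 : ‖iteratedFDeriv ℝ c.length a (κ^[n] x)‖ ≤ Qa :=
      (hBa c.length _).trans (hQa _ c.length_le)
    have e2 : ∏ j, ‖iteratedFDeriv ℝ (c.partSize j) (κ^[n]) x‖ ≤
        D ^ m * Real.exp (n * m * Γ) := by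
      calc ∏ j, ‖iteratedFDeriv ℝ (c.partSize j) (κ^[n]) x‖
          ≤ ∏ j : Fin c.length, (D * Real.exp (n * (c.partSize j) * Γ)) :=
            Finset.prod_le_prod (fun j _ => norm_nonneg _)
              (fun j _ => hD (c.partSize j) (c.partSize_pos j) (c.partSize_le j) n hn x)
        _ = D ^ c.length * Real.exp (n * m * Γ) := prod_DD_exp c n Γ D
        _ ≤ D ^ m * Real.exp (n * m * Γ) :=
            mul_le_mul_of_nonneg_right (pow_le_pow_right₀ hD1 c.length_le)
              (Real.exp_nonneg _)
    exact mul_le_mul e1 e2 (Finset.prod_nonneg (fun j _ => norm_nonneg _)) hQa0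
  refine (Finset.sum_le_card_nsmul _ _ _ hterm).trans ?_
  rw [nsmul_eq_mul, Finset.card_univ]
  ring_nf
  apply le_of_eq
  ring
end

section
/- Under the standing hypotheses on κ and a, assume additionally |a(x)| ≤ 1 for all x ∈ ℝ². Then for every integer m ≥ 0 there exists a constant K (depending on m, a, κ) such that for every n ≥ 1 and every x ∈ ℝ²: ‖iteratedFDeriv ℝ m (y ↦ ∏_{i=1}^{n} a(κ^[i] y)) x‖ ≤ K n^m e^{n m Γ}. In particular, for any Γ' > Γ there is K' with ‖iteratedFDeriv ℝ m (y ↦ ∏_{i=1}^{n} a(κ^[i] y)) x‖ ≤ K' e^{n m Γ'} for all n ≥ 1 and x. -/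
open scoped BigOperators

lemma choose_le_two_pow' (n k : ℕ) : n.choose k ≤ 2 ^ n := by
  rcases le_or_gt k n with h | h
  · calc n.choose k ≤ ∑ m ∈ Finset.range (n+1), n.choose m :=
        Finset.single_le_sum (fun i _ => Nat.zero_le _) (Finset.mem_range.mpr (by omega))
    _ = 2 ^ n := Nat.sum_range_choose n
  · simp [Nat.choose_eq_zero_of_lt h]

lemma one_le_mul3 {a b c : ℝ} (ha : 1 ≤ a) (hb : 1 ≤ b) (hc : 1 ≤ c) : 1 ≤ a * b * c := by
  have hab : (1:ℝ) ≤ a * b := by nlinarith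
  nlinarith

lemma normIF_one' {F : Type*} [NormedAddCommGroup F] [NormedSpace ℝ F]
    (f : ℝ × ℝ → F) (x : ℝ × ℝ) :
    ‖iteratedFDeriv ℝ 1 f x‖ = ‖fderiv ℝ f x‖ := by
  rw [← norm_iteratedFDeriv_fderiv, norm_iteratedFDeriv_zero]

lemma boundsUpTo (κ : ℝ × ℝ → ℝ × ℝ) (c : ℝ)
    (hκk : ∀ k : ℕ, 2 ≤ k → ∃ B : ℝ, ∀ x, ‖iteratedFDeriv ℝ k κ x‖ ≤ B)
    (hκ1 : ∀ x, ‖iteratedFDeriv ℝ 1 κ x‖ ≤ c) :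
    ∀ K : ℕ, ∃ B : ℝ, 1 ≤ B ∧ ∀ j, 1 ≤ j → j ≤ K → ∀ x, ‖iteratedFDeriv ℝ j κ x‖ ≤ B := by
  intro K
  induction K with
  | zero => exact ⟨1, le_refl 1, by omega⟩
  | succ K ih =>
    obtain ⟨B, hB1, hB⟩ := ih
    rcases Nat.lt_or_ge (K + 1) 2 with h | h
    · refine ⟨max B (max c 1), le_trans hB1 (le_max_left _ _), ?_⟩
      intro j hj1 hj2 x
      rcases Nat.lt_or_ge j (K + 1) with hj | hj
      · exact le_trans (hB j hj1 (by omega) x) (le_max_left _ _)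
      · have : j = 1 := by omega
        subst this
        exact le_trans (hκ1 x) (le_trans (le_max_left _ _) (le_max_right _ _))
    · obtain ⟨B', hB'⟩ := hκk (K + 1) h
      refine ⟨max B (max B' 1), le_trans hB1 (le_max_left _ _), ?_⟩
      intro j hj1 hj2 x
      rcases Nat.lt_or_ge j (K + 1) with hj | hj
      · exact le_trans (hB j hj1 (by omega) x) (le_max_left _ _)
      · have : j = K + 1 := by omega
        subst this
        exact le_trans (hB' x) (le_trans (le_max_left _ _) (le_max_right _ _))

lemma iterA (Γ : ℝ) (κ : ℝ × ℝ → ℝ × ℝ) (hκ : ContDiff ℝ (⊤ : ℕ∞) κ)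
    (hκ1 : ∀ x, ‖fderiv ℝ κ x‖ ≤ Real.exp Γ) :
    ∀ n : ℕ, ∀ x, ‖fderiv ℝ (κ^[n]) x‖ ≤ Real.exp (n * Γ) := by
  have hκd : Differentiable ℝ κ := hκ.differentiable (by simp)
  have hκn : ∀ n : ℕ, ContDiff ℝ (⊤ : ℕ∞) (κ^[n]) := by
    intro n
    induction n with
    | zero => simpa using contDiff_id
    | succ n ih => rw [Function.iterate_succ']; exact hκ.comp ih
  intro n
  induction n with
  | zero => intro x; simp [fderiv_id']
  | succ n ih =>
    intro x
    rw [Function.iterate_succ']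
    rw [fderiv_comp x (hκd _) ((hκn n).differentiable (by simp) x)]
    calc ‖(fderiv ℝ κ (κ^[n] x)).comp (fderiv ℝ (κ^[n]) x)‖
        ≤ ‖fderiv ℝ κ (κ^[n] x)‖ * ‖fderiv ℝ (κ^[n]) x‖ := ContinuousLinearMap.opNorm_comp_le _ _
      _ ≤ Real.exp Γ * Real.exp (n * Γ) := by
          apply mul_le_mul (hκ1 _) (ih x) (norm_nonneg _) (Real.exp_nonneg _)
      _ = Real.exp ((n + 1 : ℕ) * Γ) := by rw [← Real.exp_add]; push_cast; ring_nf

lemma iterB (Γ : ℝ) (hΓ : 0 < Γ) (κ : ℝ × ℝ → ℝ × ℝ) (hκ : ContDiff ℝ (⊤ : ℕ∞) κ)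
    (hκ1 : ∀ x, ‖fderiv ℝ κ x‖ ≤ Real.exp Γ)
    (hκk : ∀ k : ℕ, 2 ≤ k → ∃ B : ℝ, ∀ x, ‖iteratedFDeriv ℝ k κ x‖ ≤ B) :
    ∀ K : ℕ, ∃ C : ℝ, 1 ≤ C ∧ ∀ j, 1 ≤ j → j ≤ K → ∀ (n : ℕ) (x : ℝ × ℝ),
      ‖iteratedFDeriv ℝ j (κ^[n]) x‖ ≤ C * Real.exp (j * n * Γ) := by
  have hκd : Differentiable ℝ κ := hκ.differentiable (by simp)
  have hκn : ∀ n : ℕ, ContDiff ℝ (⊤ : ℕ∞) (κ^[n]) := by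
    intro n
    induction n with
    | zero => simpa using contDiff_id
    | succ n ih => rw [Function.iterate_succ']; exact hκ.comp ih
  intro K
  induction K with
  | zero => exact ⟨1, le_refl 1, by omega⟩
  | succ K ih =>
    obtain ⟨C, hC1, hC⟩ := ih
    have hC0 : (0:ℝ) ≤ C := le_trans zero_le_one hC1
    -- bound for the new order K + 1
    have hnew : ∃ C₁ : ℝ, 1 ≤ C₁ ∧ ∀ (n : ℕ) (x : ℝ × ℝ),
        ‖iteratedFDeriv ℝ (K + 1) (κ^[n]) x‖ ≤ C₁ * Real.exp ((K + 1 : ℕ) * n * Γ) := by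
      rcases Nat.eq_zero_or_pos K with hK0 | hKpos
      · subst hK0
        refine ⟨1, le_refl 1, fun n x => ?_⟩
        rw [normIF_one']
        calc ‖fderiv ℝ (κ^[n]) x‖ ≤ Real.exp (n * Γ) := iterA Γ κ hκ hκ1 n x
        _ = 1 * Real.exp ((1 : ℕ) * n * Γ) := by norm_num
      -- now K ≥ 1, so the new order K+1 ≥ 2
      obtain ⟨Bκ, hBκ1, hBκ⟩ := boundsUpTo κ (Real.exp Γ) hκk
        (fun x => by rw [normIF_one']; exact hκ1 x) (K + 1)
      have hBκ0 : (0:ℝ) ≤ Bκ := le_trans zero_le_one hBκ1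
      -- the uniform cross-term constant
      set Q : ℝ := (2:ℝ) ^ K * (Nat.factorial (K + 1)) * Bκ * C ^ (K + 1) with hQdef
      have hQ0 : 0 ≤ Q := by positivity
      set T : ℝ := K * Q with hTdef
      have hT0 : 0 ≤ T := by positivity
      have hd : 0 < Real.exp (2 * Γ) - Real.exp Γ := by
        have := Real.exp_lt_exp.mpr (show Γ < 2 * Γ by linarith)
        linarith
      set C₁ : ℝ := max 1 (T / (Real.exp (2 * Γ) - Real.exp Γ)) with hC₁def
      have hC₁1 : 1 ≤ C₁ := le_max_left _ _
      have hC₁0 : (0:ℝ) ≤ C₁ := le_trans zero_le_one hC₁1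
      have hTle : T ≤ C₁ * (Real.exp (2 * Γ) - Real.exp Γ) :=
        (div_le_iff₀ hd).mp (le_max_right _ _)
      have hkey : Real.exp Γ * C₁ + T ≤ C₁ * Real.exp ((K + 1 : ℕ) * Γ) := by
        have h2 : Real.exp (2 * Γ) ≤ Real.exp ((K + 1 : ℕ) * Γ) := by
          apply Real.exp_le_exp.mpr
          have : (2:ℝ) ≤ (K + 1 : ℕ) := by exact_mod_cast Nat.succ_le_succ hKpos
          nlinarith
        nlinarith
      refine ⟨C₁, hC₁1, fun n => ?_⟩
      induction n with
      | zero =>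
        intro x
        have hz : iteratedFDeriv ℝ (K + 1) (κ^[0]) x = 0 := by
          rw [Function.iterate_zero]
          have hid : fderiv ℝ (id : ℝ × ℝ → ℝ × ℝ) =
              fun _ => ContinuousLinearMap.id ℝ (ℝ × ℝ) := funext fun y => fderiv_id
          have : ‖iteratedFDeriv ℝ (K + 1) (id : ℝ × ℝ → ℝ × ℝ) x‖ = 0 := by
            rw [← norm_iteratedFDeriv_fderiv, hid,
              iteratedFDeriv_const_of_ne hKpos.ne']
            simp
          exact norm_eq_zero.mp this
        rw [hz]
        simp only [norm_zero]
        positivity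
      | succ n ihn =>
        intro x
        -- the composition formula for the derivative
        have hdf : fderiv ℝ (κ^[n + 1]) = fun y =>
            (ContinuousLinearMap.compL ℝ (ℝ × ℝ) (ℝ × ℝ) (ℝ × ℝ))
              (((fderiv ℝ κ) ∘ (κ^[n])) y) (fderiv ℝ (κ^[n]) y) := by
          funext y
          rw [Function.iterate_succ', fderiv_comp y (hκd _) ((hκn n).differentiable (by simp) y)]
          rfl
        have hf : ContDiff ℝ (⊤ : ℕ∞) ((fderiv ℝ κ) ∘ (κ^[n])) :=
          (hκ.fderiv_right (by simp)).comp (hκn n)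
        have hg : ContDiff ℝ (⊤ : ℕ∞) (fderiv ℝ (κ^[n])) := (hκn n).fderiv_right (by simp)
        have step1 : ‖iteratedFDeriv ℝ (K + 1) (κ^[n + 1]) x‖ ≤
            ∑ i ∈ Finset.range (K + 1), (K.choose i : ℝ) *
              ‖iteratedFDeriv ℝ i ((fderiv ℝ κ) ∘ (κ^[n])) x‖ *
              ‖iteratedFDeriv ℝ (K - i) (fderiv ℝ (κ^[n])) x‖ := by
          rw [← norm_iteratedFDeriv_fderiv, hdf]
          exact ContinuousLinearMap.norm_iteratedFDeriv_le_of_bilinear_of_le_one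
            (ContinuousLinearMap.compL ℝ (ℝ × ℝ) (ℝ × ℝ) (ℝ × ℝ)) hf hg x (by exact_mod_cast le_top)
            (ContinuousLinearMap.norm_compL_le ℝ (ℝ × ℝ) (ℝ × ℝ) (ℝ × ℝ))
        have ht0 : (K.choose 0 : ℝ) *
            ‖iteratedFDeriv ℝ 0 ((fderiv ℝ κ) ∘ (κ^[n])) x‖ *
            ‖iteratedFDeriv ℝ (K - 0) (fderiv ℝ (κ^[n])) x‖ ≤
            Real.exp Γ * (C₁ * Real.exp ((K + 1 : ℕ) * n * Γ)) := by
          simp only [Nat.choose_zero_right, Nat.cast_one, one_mul, norm_iteratedFDeriv_zero,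
            Nat.sub_zero, Function.comp_apply, norm_iteratedFDeriv_fderiv]
          exact mul_le_mul (hκ1 _) (ihn x) (norm_nonneg _) (Real.exp_nonneg _)
        have hterm : ∀ i ∈ Finset.range K, (K.choose (i + 1) : ℝ) *
            ‖iteratedFDeriv ℝ (i + 1) ((fderiv ℝ κ) ∘ (κ^[n])) x‖ *
            ‖iteratedFDeriv ℝ (K - (i + 1)) (fderiv ℝ (κ^[n])) x‖ ≤
            Q * Real.exp ((K + 1 : ℕ) * n * Γ) := by
          intro i hi
          have hiK : i < K := Finset.mem_range.mp hi
          have e1 : ‖iteratedFDeriv ℝ (i + 1) ((fderiv ℝ κ) ∘ (κ^[n])) x‖ ≤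
              (Nat.factorial (i + 1) : ℝ) * Bκ * (C * Real.exp (n * Γ)) ^ (i + 1) := by
            apply norm_iteratedFDeriv_comp_le (hκ.fderiv_right (by simp)) (hκn n) (by exact_mod_cast le_top) x
            · intro l hl
              rw [norm_iteratedFDeriv_fderiv]
              exact hBκ (l + 1) (by omega) (by omega) _
            · intro l hl1 hl2
              calc ‖iteratedFDeriv ℝ l (κ^[n]) x‖ ≤ C * Real.exp (l * n * Γ) :=
                    hC l hl1 (by omega) n x
              _ ≤ C ^ l * Real.exp (n * Γ) ^ l := by
                  have h1 : C ≤ C ^ l := by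
                    calc C = C ^ 1 := (pow_one C).symm
                    _ ≤ C ^ l := pow_le_pow_right₀ hC1 hl1
                  have h2 : Real.exp ((l : ℝ) * n * Γ) = Real.exp (n * Γ) ^ l := by
                    rw [mul_assoc, Real.exp_nat_mul]
                  rw [h2]
                  exact mul_le_mul_of_nonneg_right h1 (pow_nonneg (Real.exp_nonneg _) l)
              _ = (C * Real.exp (n * Γ)) ^ l := (mul_pow _ _ _).symm
          have e2 : ‖iteratedFDeriv ℝ (K - (i + 1)) (fderiv ℝ (κ^[n])) x‖ ≤
              C * Real.exp ((K - i : ℕ) * n * Γ) := by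
            rw [norm_iteratedFDeriv_fderiv]
            have hsub : K - (i + 1) + 1 = K - i := by omega
            rw [hsub]
            exact hC (K - i) (by omega) (by omega) n x
          have hch : (K.choose (i + 1) : ℝ) ≤ 2 ^ K := by
            exact_mod_cast choose_le_two_pow' K (i + 1)
          calc (K.choose (i + 1) : ℝ) *
              ‖iteratedFDeriv ℝ (i + 1) ((fderiv ℝ κ) ∘ (κ^[n])) x‖ *
              ‖iteratedFDeriv ℝ (K - (i + 1)) (fderiv ℝ (κ^[n])) x‖ ≤
              (2 : ℝ) ^ K * ((Nat.factorial (i + 1) : ℝ) * Bκ *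
                (C * Real.exp (n * Γ)) ^ (i + 1)) * (C * Real.exp ((K - i : ℕ) * n * Γ)) := by
                  have hn1 : (0:ℝ) ≤ (K.choose (i+1) : ℝ) := Nat.cast_nonneg _
                  have hn2 : (0:ℝ) ≤ ‖iteratedFDeriv ℝ (i + 1) ((fderiv ℝ κ) ∘ (κ^[n])) x‖ :=
                    norm_nonneg _
                  have hn3 : (0:ℝ) ≤ (Nat.factorial (i + 1) : ℝ) * Bκ *
                      (C * Real.exp (n * Γ)) ^ (i + 1) := le_trans hn2 e1
                  gcongr
          _ = ((2 : ℝ) ^ K * (Nat.factorial (i + 1) : ℝ) * Bκ * (C ^ (i + 1) * C)) *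
              (Real.exp (n * Γ) ^ (i + 1) * Real.exp ((K - i : ℕ) * n * Γ)) := by
            rw [mul_pow]; ring
          _ = ((2 : ℝ) ^ K * (Nat.factorial (i + 1) : ℝ) * Bκ * (C ^ (i + 1) * C)) *
              Real.exp ((K + 1 : ℕ) * n * Γ) := by
            congr 1
            rw [← Real.exp_nat_mul, ← Real.exp_add]
            congr 1
            have hc : ((K - i : ℕ) : ℝ) = (K : ℝ) - (i : ℝ) := by
              exact_mod_cast Nat.cast_sub hiK.le
            rw [hc]
            push_cast
            ring
          _ ≤ Q * Real.exp ((K + 1 : ℕ) * n * Γ) := by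
            apply mul_le_mul_of_nonneg_right _ (Real.exp_nonneg _)
            have f1 : (Nat.factorial (i + 1) : ℝ) ≤ (Nat.factorial (K + 1) : ℝ) := by
              exact_mod_cast Nat.factorial_le (by omega)
            have f2 : C ^ (i + 1) * C ≤ C ^ (K + 1) := by
              rw [← pow_succ]
              exact pow_le_pow_right₀ hC1 (by omega)
            rw [hQdef]
            exact mul_le_mul (mul_le_mul_of_nonneg_right
              (mul_le_mul_of_nonneg_left f1 (by positivity)) hBκ0) f2 (by positivity)
              (by positivity)
        have hsum : ∑ i ∈ Finset.range (K + 1), (K.choose i : ℝ) *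
            ‖iteratedFDeriv ℝ i ((fderiv ℝ κ) ∘ (κ^[n])) x‖ *
            ‖iteratedFDeriv ℝ (K - i) (fderiv ℝ (κ^[n])) x‖ ≤
            T * Real.exp ((K + 1 : ℕ) * n * Γ) +
              Real.exp Γ * (C₁ * Real.exp ((K + 1 : ℕ) * n * Γ)) := by
          rw [Finset.sum_range_succ']
          apply add_le_add _ ht0
          calc ∑ i ∈ Finset.range K, (K.choose (i + 1) : ℝ) *
              ‖iteratedFDeriv ℝ (i + 1) ((fderiv ℝ κ) ∘ (κ^[n])) x‖ *
              ‖iteratedFDeriv ℝ (K - (i + 1)) (fderiv ℝ (κ^[n])) x‖ ≤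
              ∑ _i ∈ Finset.range K, Q * Real.exp ((K + 1 : ℕ) * n * Γ) :=
            Finset.sum_le_sum hterm
          _ = T * Real.exp ((K + 1 : ℕ) * n * Γ) := by
            rw [Finset.sum_const, Finset.card_range, nsmul_eq_mul, hTdef]; ring
        calc ‖iteratedFDeriv ℝ (K + 1) (κ^[n + 1]) x‖ ≤
            T * Real.exp ((K + 1 : ℕ) * n * Γ) +
              Real.exp Γ * (C₁ * Real.exp ((K + 1 : ℕ) * n * Γ)) := le_trans step1 hsum
        _ = (Real.exp Γ * C₁ + T) * Real.exp ((K + 1 : ℕ) * n * Γ) := by ring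
        _ ≤ (C₁ * Real.exp ((K + 1 : ℕ) * Γ)) * Real.exp ((K + 1 : ℕ) * n * Γ) :=
            mul_le_mul_of_nonneg_right hkey (Real.exp_nonneg _)
        _ = C₁ * Real.exp ((K + 1 : ℕ) * (n + 1 : ℕ) * Γ) := by
            rw [mul_assoc, ← Real.exp_add]
            congr 2
            push_cast
            ring
    obtain ⟨C₁, hC₁1, hnewb⟩ := hnew
    refine ⟨max C C₁, le_trans hC1 (le_max_left _ _), ?_⟩
    intro j hj1 hj2 n x
    rcases Nat.lt_or_ge j (K + 1) with hj | hj
    · calc ‖iteratedFDeriv ℝ j (κ^[n]) x‖ ≤ C * Real.exp (j * n * Γ) := hC j hj1 (by omega) n x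
      _ ≤ max C C₁ * Real.exp (j * n * Γ) := by
          apply mul_le_mul_of_nonneg_right (le_max_left _ _) (Real.exp_nonneg _)
    · have : j = K + 1 := by omega
      subst this
      calc ‖iteratedFDeriv ℝ (K+1) (κ^[n]) x‖ ≤ C₁ * Real.exp ((K+1:ℕ) * n * Γ) := hnewb n x
      _ ≤ max C C₁ * Real.exp ((K+1:ℕ) * n * Γ) := by
          apply mul_le_mul_of_nonneg_right (le_max_right _ _) (Real.exp_nonneg _)

lemma aBoundsUpTo (a : ℝ × ℝ → ℂ)
    (hak : ∀ k : ℕ, ∃ B : ℝ, ∀ x, ‖iteratedFDeriv ℝ k a x‖ ≤ B) :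
    ∀ K : ℕ, ∃ B : ℝ, 1 ≤ B ∧ ∀ j, j ≤ K → ∀ x, ‖iteratedFDeriv ℝ j a x‖ ≤ B := by
  intro K
  induction K with
  | zero =>
    obtain ⟨B, hB⟩ := hak 0
    exact ⟨max B 1, le_max_right _ _, fun j hj x => by
      interval_cases j; exact le_trans (hB x) (le_max_left _ _)⟩
  | succ K ih =>
    obtain ⟨B, hB1, hB⟩ := ih
    obtain ⟨B', hB'⟩ := hak (K + 1)
    refine ⟨max B (max B' 1), le_trans hB1 (le_max_left _ _), fun j hj x => ?_⟩
    rcases Nat.lt_or_ge j (K + 1) with h | h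
    · exact le_trans (hB j (by omega) x) (le_max_left _ _)
    · have : j = K + 1 := by omega
      subst this
      exact le_trans (hB' x) (le_trans (le_max_left _ _) (le_max_right _ _))

lemma compA (Γ : ℝ) (hΓ : 0 < Γ) (κ : ℝ × ℝ → ℝ × ℝ) (hκ : ContDiff ℝ (⊤ : ℕ∞) κ)
    (hκ1 : ∀ x, ‖fderiv ℝ κ x‖ ≤ Real.exp Γ)
    (hκk : ∀ k : ℕ, 2 ≤ k → ∃ B : ℝ, ∀ x, ‖iteratedFDeriv ℝ k κ x‖ ≤ B)
    (a : ℝ × ℝ → ℂ) (ha : ContDiff ℝ (⊤ : ℕ∞) a)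
    (hak : ∀ k : ℕ, ∃ B : ℝ, ∀ x, ‖iteratedFDeriv ℝ k a x‖ ≤ B)
    (ha1 : ∀ x, ‖a x‖ ≤ 1) :
    ∀ K : ℕ, ∃ A : ℝ, 1 ≤ A ∧ ∀ k, k ≤ K → ∀ (i : ℕ) (x : ℝ × ℝ),
      ‖iteratedFDeriv ℝ k (fun y => a (κ^[i] y)) x‖ ≤ A * Real.exp (k * i * Γ) := by
  have hκn : ∀ n : ℕ, ContDiff ℝ (⊤ : ℕ∞) (κ^[n]) := by
    intro n
    induction n with
    | zero => simpa using contDiff_id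
    | succ n ih => rw [Function.iterate_succ']; exact hκ.comp ih
  intro K
  obtain ⟨C, hC1, hC⟩ := iterB Γ hΓ κ hκ hκ1 hκk K
  have hC0 : (0:ℝ) ≤ C := le_trans zero_le_one hC1
  obtain ⟨Ba, hBa1, hBa⟩ := aBoundsUpTo a hak K
  refine ⟨(Nat.factorial K : ℝ) * Ba * C ^ K, ?_, ?_⟩
  · have h1 : (1:ℝ) ≤ (Nat.factorial K : ℝ) := Nat.one_le_cast.mpr (Nat.factorial_pos K)
    have h2 : (1:ℝ) ≤ C ^ K := one_le_pow₀ hC1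
    exact one_le_mul3 h1 hBa1 h2
  intro k hk i x
  have hA1 : (1:ℝ) ≤ (Nat.factorial K : ℝ) * Ba * C ^ K := by
    have h1 : (1:ℝ) ≤ (Nat.factorial K : ℝ) := Nat.one_le_cast.mpr (Nat.factorial_pos K)
    have h2 : (1:ℝ) ≤ C ^ K := one_le_pow₀ hC1
    exact one_le_mul3 h1 hBa1 h2
  rcases Nat.eq_zero_or_pos k with hk0 | hkpos
  · subst hk0
    rw [norm_iteratedFDeriv_zero]
    have : ‖a (κ^[i] x)‖ ≤ 1 := by exact ha1 _
    calc ‖a (κ^[i] x)‖ ≤ 1 := this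
    _ ≤ ((Nat.factorial K : ℝ) * Ba * C ^ K) * Real.exp ((0:ℕ) * i * Γ) := by
        simp only [Nat.cast_zero, zero_mul, Real.exp_zero, mul_one]
        exact hA1
  · have hcomp : (fun y => a (κ^[i] y)) = a ∘ (κ^[i]) := rfl
    rw [hcomp]
    have key : ‖iteratedFDeriv ℝ k (a ∘ (κ^[i])) x‖ ≤
        (Nat.factorial k : ℝ) * Ba * (C * Real.exp (i * Γ)) ^ k := by
      apply norm_iteratedFDeriv_comp_le ha (hκn i) (by exact_mod_cast le_top) x
      · intro l hl
        exact hBa l (by omega) _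
      · intro l hl1 hl2
        calc ‖iteratedFDeriv ℝ l (κ^[i]) x‖ ≤ C * Real.exp (l * i * Γ) :=
              hC l hl1 (by omega) i x
        _ ≤ C ^ l * Real.exp (i * Γ) ^ l := by
            have h1 : C ≤ C ^ l := by
              calc C = C ^ 1 := (pow_one C).symm
              _ ≤ C ^ l := pow_le_pow_right₀ hC1 hl1
            have h2 : Real.exp ((l : ℝ) * i * Γ) = Real.exp (i * Γ) ^ l := by
              rw [mul_assoc, Real.exp_nat_mul]
            rw [h2]
            exact mul_le_mul_of_nonneg_right h1 (pow_nonneg (Real.exp_nonneg _) l)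
        _ = (C * Real.exp (i * Γ)) ^ l := (mul_pow _ _ _).symm
    calc ‖iteratedFDeriv ℝ k (a ∘ (κ^[i])) x‖ ≤
        (Nat.factorial k : ℝ) * Ba * (C * Real.exp (i * Γ)) ^ k := key
    _ = ((Nat.factorial k : ℝ) * Ba * C ^ k) * Real.exp (k * i * Γ) := by
        rw [mul_pow]
        have h2 : Real.exp ((k : ℝ) * i * Γ) = Real.exp (i * Γ) ^ k := by
          rw [mul_assoc, Real.exp_nat_mul]
        rw [h2]; ring
    _ ≤ ((Nat.factorial K : ℝ) * Ba * C ^ K) * Real.exp (k * i * Γ) := by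
        apply mul_le_mul_of_nonneg_right _ (Real.exp_nonneg _)
        have f1 : (Nat.factorial k : ℝ) ≤ (Nat.factorial K : ℝ) := by
          exact_mod_cast Nat.factorial_le hk
        have f2 : C ^ k ≤ C ^ K := pow_le_pow_right₀ hC1 hk
        have hBa0 : (0:ℝ) ≤ Ba := le_trans zero_le_one hBa1
        exact mul_le_mul (mul_le_mul_of_nonneg_right f1 hBa0) f2 (by positivity) (by positivity)

lemma prodB (Γ : ℝ) (hΓ : 0 < Γ) (κ : ℝ × ℝ → ℝ × ℝ) (hκ : ContDiff ℝ (⊤ : ℕ∞) κ)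
    (hκ1 : ∀ x, ‖fderiv ℝ κ x‖ ≤ Real.exp Γ)
    (hκk : ∀ k : ℕ, 2 ≤ k → ∃ B : ℝ, ∀ x, ‖iteratedFDeriv ℝ k κ x‖ ≤ B)
    (a : ℝ × ℝ → ℂ) (ha : ContDiff ℝ (⊤ : ℕ∞) a)
    (hak : ∀ k : ℕ, ∃ B : ℝ, ∀ x, ‖iteratedFDeriv ℝ k a x‖ ≤ B)
    (ha1 : ∀ x, ‖a x‖ ≤ 1) :
    ∀ M : ℕ, ∃ K : ℝ, 1 ≤ K ∧ ∀ j, j ≤ M → ∀ n : ℕ, 1 ≤ n → ∀ x : ℝ × ℝ,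
      ‖iteratedFDeriv ℝ j (fun y => ∏ i ∈ Finset.Icc 1 n, a (κ^[i] y)) x‖
        ≤ K * (n : ℝ) ^ j * Real.exp (j * n * Γ) := by
  have hκn : ∀ n : ℕ, ContDiff ℝ (⊤ : ℕ∞) (κ^[n]) := by
    intro n
    induction n with
    | zero => simpa using contDiff_id
    | succ n ih => rw [Function.iterate_succ']; exact hκ.comp ih
  have hfn : ∀ n : ℕ, ContDiff ℝ (⊤ : ℕ∞) (fun y => ∏ i ∈ Finset.Icc 1 n, a (κ^[i] y)) :=
    fun n => contDiff_prod (fun i _ => ha.comp (hκn i))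
  have hnorm1 : ∀ (n : ℕ) (x : ℝ × ℝ), ‖∏ i ∈ Finset.Icc 1 n, a (κ^[i] x)‖ ≤ 1 := by
    intro n x
    rw [norm_prod]
    apply Finset.prod_le_one (fun i _ => norm_nonneg _)
    intro i _
    exact ha1 _
  intro M
  induction M with
  | zero =>
    refine ⟨1, le_refl 1, ?_⟩
    intro j hj n hn x
    interval_cases j
    rw [norm_iteratedFDeriv_zero]
    simpa using hnorm1 n x
  | succ M ih =>
    obtain ⟨K₀, hK01, hK0⟩ := ih
    have hK00 : (0:ℝ) ≤ K₀ := le_trans zero_le_one hK01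
    obtain ⟨A, hA1, hA⟩ := compA Γ hΓ κ hκ hκ1 hκk a ha hak ha1 (M + 1)
    have hA0 : (0:ℝ) ≤ A := le_trans zero_le_one hA1
    set KK : ℝ := 2 ^ (M + 1) * K₀ * A with hKKdef
    have hKK1 : 1 ≤ KK := one_le_mul3 (one_le_pow₀ one_le_two) hK01 hA1
    have hKK0 : (0:ℝ) ≤ KK := le_trans zero_le_one hKK1
    -- the new top order bound, by induction on n
    have hnew : ∀ n : ℕ, 1 ≤ n → ∀ x : ℝ × ℝ,
        ‖iteratedFDeriv ℝ (M + 1) (fun y => ∏ i ∈ Finset.Icc 1 n, a (κ^[i] y)) x‖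
          ≤ KK * (n : ℝ) ^ (M + 1) * Real.exp ((M + 1 : ℕ) * n * Γ) := by
      intro n hn
      induction n, hn using Nat.le_induction with
      | base =>
        intro x
        have hone : (fun y => ∏ i ∈ Finset.Icc 1 1, a (κ^[i] y)) =
            fun y => a (κ^[1] y) := by
          funext y
          rw [Finset.Icc_self, Finset.prod_singleton]
        rw [hone]
        calc ‖iteratedFDeriv ℝ (M + 1) (fun y => a (κ^[1] y)) x‖
            ≤ A * Real.exp ((M + 1 : ℕ) * (1 : ℕ) * Γ) := hA (M + 1) le_rfl 1 x
        _ ≤ KK * ((1:ℕ) : ℝ) ^ (M + 1) * Real.exp ((M + 1 : ℕ) * (1 : ℕ) * Γ) := by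
            have hp2 : (1:ℝ) ≤ 2 ^ (M + 1) := one_le_pow₀ one_le_two
            have h1 : (1:ℝ) ≤ 2 ^ (M + 1) * K₀ := by nlinarith
            have hAK : A ≤ KK := by
              calc A = 1 * A := (one_mul A).symm
              _ ≤ (2 ^ (M + 1) * K₀) * A := mul_le_mul_of_nonneg_right h1 hA0
            simpa using mul_le_mul_of_nonneg_right hAK (Real.exp_nonneg _)
      | succ n hn ihn =>
        intro x
        have hsplit : (fun y => ∏ i ∈ Finset.Icc 1 (n + 1), a (κ^[i] y)) =
            fun y => (∏ i ∈ Finset.Icc 1 n, a (κ^[i] y)) * a (κ^[n + 1] y) := by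
          funext y
          rw [Finset.prod_Icc_succ_top (by omega)]
        rw [hsplit]
        have step1 := norm_iteratedFDeriv_mul_le (𝕜 := ℝ) (hfn n) (ha.comp (hκn (n + 1))) x
          (by exact_mod_cast le_top : ((M + 1 : ℕ) : WithTop ℕ∞) ≤ ((⊤ : ℕ∞) : WithTop ℕ∞))
        have hterm : ∀ i ∈ Finset.range (M + 1), ((M + 1).choose i : ℝ) *
            ‖iteratedFDeriv ℝ i (fun y => ∏ l ∈ Finset.Icc 1 n, a (κ^[l] y)) x‖ *
            ‖iteratedFDeriv ℝ (M + 1 - i) (fun y => a (κ^[n + 1] y)) x‖ ≤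
            ((M + 1).choose i : ℝ) *
              (K₀ * A * (n : ℝ) ^ M * Real.exp ((M + 1 : ℕ) * (n + 1 : ℕ) * Γ)) := by
          intro i hi
          have hiM : i < M + 1 := Finset.mem_range.mp hi
          have e1 : ‖iteratedFDeriv ℝ i (fun y => ∏ l ∈ Finset.Icc 1 n, a (κ^[l] y)) x‖ ≤
              K₀ * (n : ℝ) ^ i * Real.exp (i * n * Γ) := hK0 i (by omega) n hn x
          have e2 : ‖iteratedFDeriv ℝ (M + 1 - i) (fun y => a (κ^[n + 1] y)) x‖ ≤
              A * Real.exp ((M + 1 - i : ℕ) * (n + 1 : ℕ) * Γ) :=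
            hA (M + 1 - i) (by omega) (n + 1) x
          calc ((M + 1).choose i : ℝ) *
              ‖iteratedFDeriv ℝ i (fun y => ∏ l ∈ Finset.Icc 1 n, a (κ^[l] y)) x‖ *
              ‖iteratedFDeriv ℝ (M + 1 - i) (fun y => a (κ^[n + 1] y)) x‖ ≤
              ((M + 1).choose i : ℝ) * (K₀ * (n : ℝ) ^ i * Real.exp (i * n * Γ)) *
                (A * Real.exp ((M + 1 - i : ℕ) * (n + 1 : ℕ) * Γ)) := by
                  gcongr
          _ ≤ ((M + 1).choose i : ℝ) *
              (K₀ * A * (n : ℝ) ^ M * Real.exp ((M + 1 : ℕ) * (n + 1 : ℕ) * Γ)) := by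
              rw [mul_assoc]
              apply mul_le_mul_of_nonneg_left _ (Nat.cast_nonneg _)
              have hp : (n : ℝ) ^ i ≤ (n : ℝ) ^ M := by
                apply pow_le_pow_right₀ _ (by omega)
                exact_mod_cast hn
              have he : Real.exp ((i : ℝ) * n * Γ) *
                  Real.exp (((M + 1 - i : ℕ) : ℝ) * (n + 1 : ℕ) * Γ) ≤
                  Real.exp (((M + 1 : ℕ) : ℝ) * ((n + 1 : ℕ) : ℝ) * Γ) := by
                rw [← Real.exp_add]
                apply Real.exp_le_exp.mpr
                have hcast : ((M + 1 - i : ℕ) : ℝ) = ((M:ℝ) + 1) - (i:ℝ) := by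
                  push_cast [Nat.cast_sub hiM.le]
                  ring
                rw [hcast]
                push_cast
                have hnn : (0:ℝ) ≤ (n:ℝ) := Nat.cast_nonneg n
                have hii : (0:ℝ) ≤ (i:ℝ) := Nat.cast_nonneg i
                nlinarith
              calc K₀ * (n : ℝ) ^ i * Real.exp ((i:ℝ) * n * Γ) *
                  (A * Real.exp (((M + 1 - i : ℕ) : ℝ) * (n + 1 : ℕ) * Γ)) =
                  (K₀ * A * (n : ℝ) ^ i) * (Real.exp ((i:ℝ) * n * Γ) *
                    Real.exp (((M + 1 - i : ℕ) : ℝ) * (n + 1 : ℕ) * Γ)) := by ring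
              _ ≤ (K₀ * A * (n : ℝ) ^ M) *
                  Real.exp (((M + 1 : ℕ) : ℝ) * ((n + 1 : ℕ) : ℝ) * Γ) := by
                  apply mul_le_mul _ he (by positivity) (by positivity)
                  exact mul_le_mul_of_nonneg_left hp (by positivity)
        have hsum : ∑ i ∈ Finset.range (M + 2), ((M + 1).choose i : ℝ) *
            ‖iteratedFDeriv ℝ i (fun y => ∏ l ∈ Finset.Icc 1 n, a (κ^[l] y)) x‖ *
            ‖iteratedFDeriv ℝ (M + 1 - i) (fun y => a (κ^[n + 1] y)) x‖ ≤
            KK * (n : ℝ) ^ M * Real.exp ((M + 1 : ℕ) * (n + 1 : ℕ) * Γ) +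
              KK * (n : ℝ) ^ (M + 1) * Real.exp ((M + 1 : ℕ) * n * Γ) := by
          rw [Finset.sum_range_succ]
          apply add_le_add
          · calc ∑ i ∈ Finset.range (M + 1), ((M + 1).choose i : ℝ) *
                ‖iteratedFDeriv ℝ i (fun y => ∏ l ∈ Finset.Icc 1 n, a (κ^[l] y)) x‖ *
                ‖iteratedFDeriv ℝ (M + 1 - i) (fun y => a (κ^[n + 1] y)) x‖ ≤
                ∑ i ∈ Finset.range (M + 1), ((M + 1).choose i : ℝ) *
                  (K₀ * A * (n : ℝ) ^ M * Real.exp ((M + 1 : ℕ) * (n + 1 : ℕ) * Γ)) :=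
              Finset.sum_le_sum hterm
            _ = (∑ i ∈ Finset.range (M + 1), ((M + 1).choose i : ℝ)) *
                  (K₀ * A * (n : ℝ) ^ M * Real.exp ((M + 1 : ℕ) * (n + 1 : ℕ) * Γ)) :=
              (Finset.sum_mul _ _ _).symm
            _ ≤ (2 : ℝ) ^ (M + 1) *
                  (K₀ * A * (n : ℝ) ^ M * Real.exp ((M + 1 : ℕ) * (n + 1 : ℕ) * Γ)) := by
                apply mul_le_mul_of_nonneg_right _ (by positivity)
                have hss : ∑ i ∈ Finset.range (M + 1), (M + 1).choose i ≤ 2 ^ (M + 1) := by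
                  calc ∑ i ∈ Finset.range (M + 1), (M + 1).choose i ≤
                      ∑ i ∈ Finset.range (M + 2), (M + 1).choose i :=
                    Finset.sum_le_sum_of_subset (Finset.range_subset_range.mpr (by omega))
                  _ = 2 ^ (M + 1) := Nat.sum_range_choose (M + 1)
                exact_mod_cast hss
            _ = KK * (n : ℝ) ^ M * Real.exp ((M + 1 : ℕ) * (n + 1 : ℕ) * Γ) := by
                rw [hKKdef]; ring
          · have h1 : ((M + 1).choose (M + 1) : ℝ) = 1 := by simp
            rw [h1, one_mul]
            have h2 : ‖iteratedFDeriv ℝ (M + 1 - (M + 1))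
                (fun y => a (κ^[n + 1] y)) x‖ ≤ 1 := by
              rw [Nat.sub_self, norm_iteratedFDeriv_zero]
              exact ha1 _
            have h3 := mul_le_mul (ihn x) h2 (norm_nonneg _) (by positivity : (0:ℝ) ≤
              KK * (n : ℝ) ^ (M + 1) * Real.exp ((M + 1 : ℕ) * n * Γ))
            exact le_trans h3 (le_of_eq (mul_one _))
        calc ‖iteratedFDeriv ℝ (M + 1)
                (fun y => (∏ i ∈ Finset.Icc 1 n, a (κ^[i] y)) * a (κ^[n + 1] y)) x‖ ≤
            ∑ i ∈ Finset.range (M + 2), ((M + 1).choose i : ℝ) *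
              ‖iteratedFDeriv ℝ i (fun y => ∏ l ∈ Finset.Icc 1 n, a (κ^[l] y)) x‖ *
              ‖iteratedFDeriv ℝ (M + 1 - i) (fun y => a (κ^[n + 1] y)) x‖ := step1
        _ ≤ KK * (n : ℝ) ^ M * Real.exp ((M + 1 : ℕ) * (n + 1 : ℕ) * Γ) +
              KK * (n : ℝ) ^ (M + 1) * Real.exp ((M + 1 : ℕ) * n * Γ) := hsum
        _ ≤ KK * ((n + 1 : ℕ) : ℝ) ^ (M + 1) * Real.exp ((M + 1 : ℕ) * (n + 1 : ℕ) * Γ) := by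
                have hc : ((n + 1 : ℕ) : ℝ) = (n : ℝ) + 1 := by push_cast; ring
                have hpow : (n : ℝ) ^ M * ((n : ℝ) + 1) ≤ ((n : ℝ) + 1) ^ (M + 1) := by
                  have h1 : (n : ℝ) ^ M ≤ ((n : ℝ) + 1) ^ M :=
                    pow_le_pow_left₀ (Nat.cast_nonneg n) (by linarith) M
                  calc (n : ℝ) ^ M * ((n : ℝ) + 1) ≤ ((n : ℝ) + 1) ^ M * ((n : ℝ) + 1) :=
                    mul_le_mul_of_nonneg_right h1 (by positivity)
                  _ = ((n : ℝ) + 1) ^ (M + 1) := (pow_succ _ _).symm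
                have hexp2 : Real.exp (((M + 1 : ℕ) : ℝ) * (n : ℝ) * Γ) ≤
                    Real.exp (((M + 1 : ℕ) : ℝ) * ((n + 1 : ℕ) : ℝ) * Γ) := by
                  apply Real.exp_le_exp.mpr
                  push_cast
                  nlinarith [Nat.cast_nonneg (α := ℝ) n, Nat.cast_nonneg (α := ℝ) M]
                have hE0 : (0:ℝ) ≤ Real.exp (((M + 1 : ℕ) : ℝ) * ((n + 1 : ℕ) : ℝ) * Γ) :=
                  Real.exp_nonneg _
                calc KK * (n : ℝ) ^ M * Real.exp ((M + 1 : ℕ) * (n + 1 : ℕ) * Γ) +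
                    KK * (n : ℝ) ^ (M + 1) * Real.exp ((M + 1 : ℕ) * n * Γ) ≤
                    KK * (n : ℝ) ^ M * Real.exp ((M + 1 : ℕ) * (n + 1 : ℕ) * Γ) +
                    KK * (n : ℝ) ^ (M + 1) * Real.exp ((M + 1 : ℕ) * (n + 1 : ℕ) * Γ) := by
                        exact add_le_add_right (mul_le_mul_of_nonneg_left hexp2 (by positivity)) _
                _ = KK * ((n : ℝ) ^ M * ((n : ℝ) + 1)) *
                      Real.exp ((M + 1 : ℕ) * (n + 1 : ℕ) * Γ) := by ring
                _ ≤ KK * ((n : ℝ) + 1) ^ (M + 1) *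
                      Real.exp ((M + 1 : ℕ) * (n + 1 : ℕ) * Γ) :=
                    mul_le_mul_of_nonneg_right (mul_le_mul_of_nonneg_left hpow hKK0) hE0
                _ = KK * ((n + 1 : ℕ) : ℝ) ^ (M + 1) *
                      Real.exp ((M + 1 : ℕ) * (n + 1 : ℕ) * Γ) := by rw [hc]
    refine ⟨max K₀ KK, le_trans hK01 (le_max_left _ _), ?_⟩
    intro j hj n hn x
    rcases Nat.lt_or_ge j (M + 1) with h | h
    · calc ‖iteratedFDeriv ℝ j (fun y => ∏ i ∈ Finset.Icc 1 n, a (κ^[i] y)) x‖ ≤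
          K₀ * (n : ℝ) ^ j * Real.exp (j * n * Γ) := hK0 j (by omega) n hn x
      _ ≤ max K₀ KK * (n : ℝ) ^ j * Real.exp (j * n * Γ) := by
          apply mul_le_mul_of_nonneg_right _ (Real.exp_nonneg _)
          exact mul_le_mul_of_nonneg_right (le_max_left _ _) (by positivity)
    · have : j = M + 1 := by omega
      subst this
      calc ‖iteratedFDeriv ℝ (M + 1) (fun y => ∏ i ∈ Finset.Icc 1 n, a (κ^[i] y)) x‖ ≤
          KK * (n : ℝ) ^ (M + 1) * Real.exp ((M + 1 : ℕ) * n * Γ) := hnew n hn x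
      _ ≤ max K₀ KK * (n : ℝ) ^ (M + 1) * Real.exp ((M + 1 : ℕ) * n * Γ) := by
          apply mul_le_mul_of_nonneg_right _ (Real.exp_nonneg _)
          exact mul_le_mul_of_nonneg_right (le_max_right _ _) (by positivity)

/-- Derivative bounds for the damping products `ãₙ = ∏_{i=1}^n a ∘ κⁱ`: under the
standing hypotheses on `κ` and `a`, and assuming `|a| ≤ 1`, for every `m` there is `K`
with `‖D^m ãₙ(x)‖ ≤ K n^m e^{n m Γ}`; in particular for any `Γ' > Γ` there is `K'` with
`‖D^m ãₙ(x)‖ ≤ K' e^{n m Γ'}`. -/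
theorem iteratedFDeriv_prod_comp_iterate_le (Γ : ℝ) (hΓ : 0 < Γ)
    (κ : ℝ × ℝ → ℝ × ℝ) (hκ : ContDiff ℝ (⊤ : ℕ∞) κ)
    (hκ1 : ∀ x, ‖fderiv ℝ κ x‖ ≤ Real.exp Γ)
    (hκk : ∀ k : ℕ, 2 ≤ k → ∃ B : ℝ, ∀ x, ‖iteratedFDeriv ℝ k κ x‖ ≤ B)
    (a : ℝ × ℝ → ℂ) (ha : ContDiff ℝ (⊤ : ℕ∞) a)
    (hak : ∀ k : ℕ, ∃ B : ℝ, ∀ x, ‖iteratedFDeriv ℝ k a x‖ ≤ B)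
    (ha1 : ∀ x, ‖a x‖ ≤ 1) :
    ∀ m : ℕ,
      (∃ K : ℝ, ∀ n : ℕ, 1 ≤ n → ∀ x : ℝ × ℝ,
        ‖iteratedFDeriv ℝ m (fun y => ∏ i ∈ Finset.Icc 1 n, a (κ^[i] y)) x‖
          ≤ K * (n : ℝ) ^ m * Real.exp (n * m * Γ)) ∧
      (∀ Γ' : ℝ, Γ < Γ' → ∃ K' : ℝ, ∀ n : ℕ, 1 ≤ n → ∀ x : ℝ × ℝ,
        ‖iteratedFDeriv ℝ m (fun y => ∏ i ∈ Finset.Icc 1 n, a (κ^[i] y)) x‖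
          ≤ K' * Real.exp (n * m * Γ')) := by
  intro m
  obtain ⟨K, hK1, hK⟩ := prodB Γ hΓ κ hκ hκ1 hκk a ha hak ha1 m
  have hK0 : (0:ℝ) ≤ K := le_trans zero_le_one hK1
  have main : ∀ n : ℕ, 1 ≤ n → ∀ x : ℝ × ℝ,
      ‖iteratedFDeriv ℝ m (fun y => ∏ i ∈ Finset.Icc 1 n, a (κ^[i] y)) x‖
        ≤ K * (n : ℝ) ^ m * Real.exp (n * m * Γ) := by
    intro n hn x
    have h := hK m le_rfl n hn x
    have hcomm : (m : ℝ) * n * Γ = (n : ℝ) * m * Γ := by ring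
    rwa [hcomm] at h
  constructor
  · exact ⟨K, main⟩
  · intro Γ' hΓ'
    have hδ : 0 < Γ' - Γ := by linarith
    refine ⟨K / (Γ' - Γ) ^ m, fun n hn x => ?_⟩
    have h2 : (n : ℝ) * (Γ' - Γ) ≤ Real.exp ((n : ℝ) * (Γ' - Γ)) := by
      have := Real.add_one_le_exp ((n : ℝ) * (Γ' - Γ))
      linarith
    have h3 : (n : ℝ) ≤ Real.exp ((n : ℝ) * (Γ' - Γ)) / (Γ' - Γ) := by
      rw [le_div_iff₀ hδ]
      exact h2
    have h4 : (n : ℝ) ^ m ≤ (Real.exp ((n : ℝ) * (Γ' - Γ)) / (Γ' - Γ)) ^ m :=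
      pow_le_pow_left₀ (Nat.cast_nonneg n) h3 m
    have h5 : (Real.exp ((n : ℝ) * (Γ' - Γ)) / (Γ' - Γ)) ^ m =
        Real.exp ((n : ℝ) * m * (Γ' - Γ)) / (Γ' - Γ) ^ m := by
      rw [div_pow, ← Real.exp_nat_mul]
      congr 2
      ring
    have h45 : (n : ℝ) ^ m ≤ Real.exp ((n : ℝ) * m * (Γ' - Γ)) / (Γ' - Γ) ^ m :=
      h5 ▸ h4
    have hexpmul : Real.exp ((n : ℝ) * m * (Γ' - Γ)) * Real.exp ((n : ℝ) * m * Γ) =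
        Real.exp ((n : ℝ) * m * Γ') := by
      rw [← Real.exp_add]
      congr 1
      ring
    calc ‖iteratedFDeriv ℝ m (fun y => ∏ i ∈ Finset.Icc 1 n, a (κ^[i] y)) x‖ ≤
        K * (n : ℝ) ^ m * Real.exp (n * m * Γ) := main n hn x
    _ ≤ K * (Real.exp ((n : ℝ) * m * (Γ' - Γ)) / (Γ' - Γ) ^ m) * Real.exp (n * m * Γ) := by
        apply mul_le_mul_of_nonneg_right _ (Real.exp_nonneg _)
        exact mul_le_mul_of_nonneg_left h45 hK0
    _ = K / (Γ' - Γ) ^ m * (Real.exp ((n : ℝ) * m * (Γ' - Γ)) * Real.exp ((n : ℝ) * m * Γ)) := by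
        ring
    _ = K / (Γ' - Γ) ^ m * Real.exp (n * m * Γ') := by rw [hexpmul]
end

section
/- (Resolvent symbol estimates.) Let δ ≥ 0, ε ∈ (0,1] with δ + ε < 1/2, and let (C_k)_{k∈ℕ} be nonnegative constants. Then for every m ∈ ℕ there is a constant C'_m, depending only on m and (C_k), with the following property: for every h ∈ (0,1], every smooth a : ℝ² → ℝ satisfying sup_x ‖iteratedFDeriv ℝ k a x‖ ≤ C_k h^{−δk} for all k, and every z ∈ ℂ with |Im z| ≥ h^ε, the function x ↦ (z − a(x))⁻¹ is smooth and satisfies sup_x ‖iteratedFDeriv ℝ m (x ↦ (z − a x)⁻¹) x‖ ≤ C'_m h^{−ε} h^{−(δ+ε) m}. -/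
open scoped ContDiff

lemma norm_iteratedFDeriv_real_eq_complex {f : ℂ → ℂ} {t : Set ℂ} (ht : IsOpen t)
    {n : ℕ} (hf : ContDiffOn ℂ (n : WithTop ℕ∞) f t) {x : ℂ} (hx : x ∈ t) :
    ‖iteratedFDeriv ℝ n f x‖ = ‖iteratedFDeriv ℂ n f x‖ := by
  have hR : UniqueDiffOn ℝ t := ht.uniqueDiffOn
  have hCu : UniqueDiffOn ℂ t := ht.uniqueDiffOn
  have H := hf.ftaylorSeriesWithin hCu
  have HR := H.restrictScalars ℝ
  have e1 : (fun y => (ftaylorSeriesWithin ℂ f t y).restrictScalars ℝ) x n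
      = iteratedFDerivWithin ℝ n f t x :=
    HR.eq_iteratedFDerivWithin_of_uniqueDiffOn le_rfl hR hx
  have e2 : ftaylorSeriesWithin ℂ f t x n = iteratedFDerivWithin ℂ n f t x := rfl
  have e3 : ‖(ftaylorSeriesWithin ℂ f t x n).restrictScalars ℝ‖
      = ‖ftaylorSeriesWithin ℂ f t x n‖ :=
    ContinuousMultilinearMap.norm_restrictScalars _
  rw [← iteratedFDerivWithin_of_isOpen (f := f) (𝕜 := ℝ) n ht hx,
    ← iteratedFDerivWithin_of_isOpen (f := f) (𝕜 := ℂ) n ht hx,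
    ← e1, ← e2]
  exact e3

lemma iteratedDeriv_resolvent (z : ℂ) (n : ℕ) :
    ∀ x : ℂ, x ≠ z →
      iteratedDeriv n (fun w : ℂ => (z - w)⁻¹) x
        = ((Nat.factorial n) : ℂ) * (z - x) ^ (-(n + 1) : ℤ) := by
  induction n with
  | zero => intro x hx; simp [zpow_neg]
  | succ n ih =>
    intro x hx
    have hz : z - x ≠ 0 := sub_ne_zero.mpr (Ne.symm hx)
    rw [iteratedDeriv_succ]
    have hev : iteratedDeriv n (fun w : ℂ => (z - w)⁻¹)
        =ᶠ[nhds x] fun w => ((Nat.factorial n) : ℂ) * (z - w) ^ (-(n + 1) : ℤ) := by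
      filter_upwards [isOpen_ne.mem_nhds hx] with w hw using ih w hw
    rw [hev.deriv_eq]
    have hsub : HasDerivAt (fun w : ℂ => z - w) (-1) x := by
      simpa using (hasDerivAt_id x).const_sub z
    have h1 : HasDerivAt (fun w : ℂ => (z - w) ^ (-(n + 1) : ℤ))
        ((-(n + 1) : ℤ) * (z - x) ^ ((-(n + 1) : ℤ) - 1) * (-1)) x :=
      (hasDerivAt_zpow (-(n + 1) : ℤ) (z - x) (Or.inl hz)).comp x hsub
    have h2 := (h1.const_mul ((Nat.factorial n) : ℂ)).deriv
    rw [h2]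
    have hexp : ((-(n + 1) : ℤ) - 1) = (-(n + 1 + 1) : ℤ) := by ring
    rw [hexp]
    push_cast [Nat.factorial_succ]
    ring



/-- **Resolvent symbol estimates.** If `a` is a real symbol of class `S_δ⁰` (with
`h`-dependent derivative bounds `C k * h^(-δ k)`) and `z ∈ ℂ` satisfies `|Im z| ≥ h^ε`
with `δ + ε < 1/2`, then `x ↦ (z - a x)⁻¹` is a smooth symbol of class `S_{δ+ε}^ε`:
its `m`-th derivatives are `O(h^(-ε) h^(-(δ+ε)m))`, with constants depending only on
`m`, `δ`, `ε` and the `C k`. -/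
theorem resolvent_symbol_estimate (δ : ℝ) (hδ : 0 ≤ δ) (ε : ℝ) (hε0 : 0 < ε) (hε1 : ε ≤ 1)
    (hδε : δ + ε < 1 / 2) (C : ℕ → ℝ) (hC : ∀ k, 0 ≤ C k) :
    ∀ m : ℕ, ∃ C' : ℝ,
      ∀ h : ℝ, 0 < h → h ≤ 1 →
      ∀ a : ℝ × ℝ → ℝ, ContDiff ℝ (⊤ : ℕ∞) a →
        (∀ k : ℕ, ∀ x, ‖iteratedFDeriv ℝ k a x‖ ≤ C k * h ^ (-(δ * k))) →
      ∀ z : ℂ, h ^ ε ≤ |z.im| →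
        ContDiff ℝ (⊤ : ℕ∞) (fun x : ℝ × ℝ => (z - (a x : ℂ))⁻¹) ∧
        ∀ x, ‖iteratedFDeriv ℝ m (fun x : ℝ × ℝ => (z - (a x : ℂ))⁻¹) x‖
          ≤ C' * h ^ (-ε) * h ^ (-((δ + ε) * m)) := by
  intro m
  set M : ℝ := 1 + ∑ k ∈ Finset.range (m + 1), C k with hM
  have hM1 : 1 ≤ M := by
    have : 0 ≤ ∑ k ∈ Finset.range (m + 1), C k :=
      Finset.sum_nonneg fun k _ => hC k
    simp [hM]; linarith
  have hMk : ∀ k ≤ m, C k ≤ M := by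
    intro k hk
    have : C k ≤ ∑ j ∈ Finset.range (m + 1), C j :=
      Finset.single_le_sum (fun j _ => hC j) (Finset.mem_range.mpr (Nat.lt_succ_of_le hk))
    simp [hM]; linarith
  refine ⟨((Nat.factorial m) : ℝ) ^ 2 * M ^ m, ?_⟩
  intro h h0 h1 a ha hbound z hz
  have hhe : (0 : ℝ) < h ^ ε := Real.rpow_pos_of_pos h0 ε
  have hne : ∀ r : ℝ, z - (r : ℂ) ≠ 0 := by
    intro r hc
    have h2 : (z - (r : ℂ)).im = 0 := by rw [hc]; simp
    rw [Complex.sub_im, Complex.ofReal_im, sub_zero] at h2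
    rw [h2] at hz
    simp at hz
    linarith
  have hmem : ∀ r : ℝ, (r : ℂ) ≠ z := fun r => (sub_ne_zero.mp (hne r)).symm
  have haC : ContDiff ℝ (⊤ : ℕ∞) (fun x : ℝ × ℝ => ((a x : ℂ))) :=
    Complex.ofRealCLM.contDiff.comp ha
  have hsmooth : ContDiff ℝ (⊤ : ℕ∞) (fun x : ℝ × ℝ => (z - (a x : ℂ))⁻¹) :=
    (contDiff_const.sub haC).inv (fun x => hne (a x))
  refine ⟨hsmooth, ?_⟩
  intro x
  set g : ℂ → ℂ := fun w => (z - w)⁻¹ with hg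
  set f : ℝ × ℝ → ℂ := fun x => (a x : ℂ) with hf
  set t : Set ℂ := {w | w ≠ z} with htdef
  have htopen : IsOpen t := isOpen_ne
  have hgC : ContDiffOn ℂ ⊤ g t :=
    ((contDiff_const.sub contDiff_id).contDiffOn).inv
      (fun w hw => sub_ne_zero.mpr (Ne.symm hw))
  -- lower bound on |z - r| for real r
  have hlow : ∀ r : ℝ, h ^ ε ≤ ‖z - (r : ℂ)‖ := by
    intro r
    calc h ^ ε ≤ |z.im| := hz
      _ = |(z - (r : ℂ)).im| := by rw [Complex.sub_im, Complex.ofReal_im, sub_zero]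
      _ ≤ ‖z - (r : ℂ)‖ := Complex.abs_im_le_norm _
      _ = ‖z - (r : ℂ)‖ := rfl
  -- bound on derivatives of g at real points
  have hinv1 : 1 ≤ (h ^ ε)⁻¹ := by
    rw [le_inv_comm₀ one_pos hhe]
    simpa using Real.rpow_le_one h0.le h1 hε0.le
  have hgbound : ∀ i ≤ m, ∀ r : ℝ,
      ‖iteratedFDeriv ℝ i g (r : ℂ)‖
        ≤ ((Nat.factorial m) : ℝ) * ((h ^ ε)⁻¹) ^ (m + 1) := by
    intro i hi r
    have h2 : ‖iteratedFDeriv ℝ i g (r : ℂ)‖ = ‖iteratedFDeriv ℂ i g (r : ℂ)‖ :=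
      norm_iteratedFDeriv_real_eq_complex htopen (hgC.of_le le_top) (hmem r)
    rw [h2, norm_iteratedFDeriv_eq_norm_iteratedDeriv,
      iteratedDeriv_resolvent z i (r : ℂ) (hmem r)]
    rw [norm_mul, norm_zpow]
    have hnf : ‖((Nat.factorial i : ℕ) : ℂ)‖ = ((Nat.factorial i) : ℝ) := by
      simp
    rw [hnf]
    have e1 : ‖z - (r : ℂ)‖ ^ (-(i + 1) : ℤ) = (‖z - (r : ℂ)‖ ^ (i + 1 : ℕ))⁻¹ := by
      rw [zpow_neg]
      norm_cast
    rw [e1]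
    have hpos : (0 : ℝ) < ‖z - (r : ℂ)‖ := lt_of_lt_of_le hhe (hlow r)
    have e2 : (‖z - (r : ℂ)‖ ^ (i + 1 : ℕ))⁻¹ ≤ ((h ^ ε) ^ (i + 1 : ℕ))⁻¹ := by
      apply inv_anti₀ (pow_pos hhe _)
      exact pow_le_pow_left₀ hhe.le (hlow r) _
    have e3 : ((h ^ ε) ^ (i + 1 : ℕ))⁻¹ = ((h ^ ε)⁻¹) ^ (i + 1 : ℕ) := by
      rw [inv_pow]
    have e4 : ((h ^ ε)⁻¹) ^ (i + 1 : ℕ) ≤ ((h ^ ε)⁻¹) ^ (m + 1 : ℕ) :=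
      pow_le_pow_right₀ hinv1 (by omega)
    have e5 : ((Nat.factorial i) : ℝ) ≤ ((Nat.factorial m) : ℝ) := by
      exact_mod_cast Nat.factorial_le hi
    have hnn : (0 : ℝ) ≤ ((h ^ ε)⁻¹) ^ (m + 1 : ℕ) := by positivity
    calc ((Nat.factorial i) : ℝ) * (‖z - (r : ℂ)‖ ^ (i + 1 : ℕ))⁻¹
        ≤ ((Nat.factorial i) : ℝ) * ((h ^ ε)⁻¹) ^ (m + 1 : ℕ) := by
          apply mul_le_mul_of_nonneg_left _ (by positivity)
          exact le_trans e2 (le_trans (le_of_eq e3) e4)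
      _ ≤ ((Nat.factorial m) : ℝ) * ((h ^ ε)⁻¹) ^ (m + 1 : ℕ) :=
          mul_le_mul_of_nonneg_right e5 hnn
  -- bound on derivatives of f
  have hDpos : (0 : ℝ) < h ^ (-δ) := Real.rpow_pos_of_pos h0 _
  have hrpow_pow : ∀ (c : ℝ) (k : ℕ), (h ^ c) ^ k = h ^ (c * k) := by
    intro c k
    rw [← Real.rpow_natCast (h ^ c) k, ← Real.rpow_mul h0.le]
  have hfbound : ∀ i, 1 ≤ i → i ≤ m → ∀ y : ℝ × ℝ,
      ‖iteratedFDeriv ℝ i f y‖ ≤ (M * h ^ (-δ)) ^ i := by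
    intro i hi1 him y
    have e0 : ‖iteratedFDeriv ℝ i f y‖ = ‖iteratedFDeriv ℝ i a y‖ := by
      have hfc : f = (Complex.ofRealLI : ℝ →ₗᵢ[ℝ] ℂ) ∘ a := rfl
      rw [hfc, Complex.ofRealLI.norm_iteratedFDeriv_comp_left (ha.contDiffAt (x := y)) (by exact_mod_cast (le_top : (i : ℕ∞) ≤ ⊤) : (i : WithTop ℕ∞) ≤ ((⊤ : ℕ∞) : WithTop ℕ∞))]
    rw [e0]
    calc ‖iteratedFDeriv ℝ i a y‖ ≤ C i * h ^ (-(δ * i)) := hbound i y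
      _ ≤ M * (h ^ (-δ)) ^ i := by
          rw [hrpow_pow (-δ) i]
          have : -δ * i = -(δ * i) := by ring
          rw [this]
          exact mul_le_mul_of_nonneg_right (hMk i him)
            (Real.rpow_nonneg h0.le _)
      _ ≤ M ^ i * (h ^ (-δ)) ^ i := by
          apply mul_le_mul_of_nonneg_right _ (by positivity)
          exact le_self_pow₀ (by linarith) (by omega)
      _ = (M * h ^ (-δ)) ^ i := (mul_pow _ _ _).symm
  -- apply the composition bound
  have hcomp := norm_iteratedFDerivWithin_comp_le (𝕜 := ℝ) (n := m) (N := ((⊤ : ℕ∞) : WithTop ℕ∞))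
    ((hgC.of_le le_top).restrict_scalars ℝ) (haC.contDiffOn) (by exact_mod_cast (le_top : (m : ℕ∞) ≤ ⊤)) htopen.uniqueDiffOn uniqueDiffOn_univ
    (fun y _ => hmem (a y)) (Set.mem_univ x)
    (C := ((Nat.factorial m) : ℝ) * ((h ^ ε)⁻¹) ^ (m + 1))
    (D := M * h ^ (-δ))
    (fun i hi => by
      rw [iteratedFDerivWithin_of_isOpen i htopen (hmem (a x))]
      exact hgbound i hi (a x))
    (fun i hi1 hi2 => by
      rw [iteratedFDerivWithin_univ]
      exact hfbound i hi1 hi2 x)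
  rw [iteratedFDerivWithin_univ] at hcomp
  have hfun : (fun x : ℝ × ℝ => (z - (a x : ℂ))⁻¹) = g ∘ f := rfl
  rw [hfun]
  refine le_trans hcomp (le_of_eq ?_)
  -- final arithmetic
  have key : ((h ^ ε)⁻¹) ^ (m + 1) * (h ^ (-δ)) ^ m = h ^ (-ε) * h ^ (-((δ + ε) * m)) := by
    rw [← Real.rpow_neg h0.le ε, hrpow_pow (-ε) (m + 1), hrpow_pow (-δ) m,
      ← Real.rpow_add h0, ← Real.rpow_add h0]
    congr 1
    push_cast
    ring
  calc ((Nat.factorial m) : ℝ) * (((Nat.factorial m) : ℝ) * ((h ^ ε)⁻¹) ^ (m + 1))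
        * (M * h ^ (-δ)) ^ m
      = (((Nat.factorial m) : ℝ) ^ 2 * M ^ m)
        * (((h ^ ε)⁻¹) ^ (m + 1) * (h ^ (-δ)) ^ m) := by rw [mul_pow]; ring
    _ = ((Nat.factorial m) : ℝ) ^ 2 * M ^ m * (h ^ (-ε) * h ^ (-((δ + ε) * m))) := by
        rw [key]
    _ = ((Nat.factorial m) : ℝ) ^ 2 * M ^ m * h ^ (-ε) * h ^ (-((δ + ε) * m)) := by ring
end

section
/- (The Gaussian symbol is a Moyal idempotent.) Let ℏ > 0. Define Γ : ℝ² → ℝ by Γ(x, ξ) = 2 exp(−(x² + ξ²)/ℏ), and let σ : ℝ² × ℝ² → ℝ be the standard symplectic form σ((y₁,y₂),(z₁,z₂)) = y₁ z₂ − y₂ z₁. Then for every X ∈ ℝ²: (1/(πℏ))² ∫_{ℝ²} ∫_{ℝ²} Γ(X + Z) Γ(X + Y) exp((2i/ℏ) σ(Y, Z)) dY dZ = Γ(X). -/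
/-!
Both integrals are Gaussian integrals over `ℝ²` with a complex linear term, which split into
one-dimensional ones. The inner integral is a symplectic Fourier transform of `Γ`:
`∫ Γ(X + Y) e^{(2i/ℏ)σ(Y,Z)} dY = πℏ Γ(Z) e^{(2i/ℏ)σ(Z,X)}`. In the outer integral the linear
coefficient of the Gaussian `Γ(X + Z) Γ(Z)` in `Z` is isotropic (the squares of its two components
sum to zero), so completing the square contributes nothing and only `πℏ Γ(X)` is left.
-/

open MeasureTheory

/-- The standard symplectic form on `ℝ²`: `σ((y₁,y₂),(z₁,z₂)) = y₁ z₂ - y₂ z₁`. -/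
def symplecticForm (Y Z : ℝ × ℝ) : ℝ := Y.1 * Z.2 - Y.2 * Z.1

/-- The Gaussian symbol `Γ(x, ξ) = 2 exp(-(x² + ξ²)/ℏ)`. -/
noncomputable def gaussianSymbol (ℏ : ℝ) (x : ℝ × ℝ) : ℝ :=
  2 * Real.exp (-(x.1 ^ 2 + x.2 ^ 2) / ℏ)

open Real Complex

theorem integral_cexp_quadratic_prod {b : ℂ} (hb : 0 < b.re) (c₁ c₂ d : ℂ) :
    ∫ Y : ℝ × ℝ, cexp (-b * ((Y.1 : ℂ) ^ 2 + (Y.2 : ℂ) ^ 2) + c₁ * Y.1 + c₂ * Y.2 + d)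
      = π / b * cexp ((c₁ ^ 2 + c₂ ^ 2) / (4 * b) + d) := by
  have hb0 : b ≠ 0 := by rintro rfl; simp at hb
  have hπb : (π / b : ℂ) ≠ 0 := div_ne_zero (ofReal_ne_zero.mpr pi_ne_zero) hb0
  have integral_line (c : ℂ) : ∫ u : ℝ, cexp (-b * u ^ 2 + c * u)
      = (π / b) ^ (1 / 2 : ℂ) * cexp (c ^ 2 / (4 * b)) := by
    simpa [div_neg, neg_div] using integral_cexp_quadratic (b := -b) (by simpa using hb) c 0
  calc ∫ Y : ℝ × ℝ, cexp (-b * ((Y.1 : ℂ) ^ 2 + (Y.2 : ℂ) ^ 2) + c₁ * Y.1 + c₂ * Y.2 + d)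
      = cexp d * ∫ Y : ℝ × ℝ, cexp (-b * (Y.1 : ℂ) ^ 2 + c₁ * Y.1)
          * cexp (-b * (Y.2 : ℂ) ^ 2 + c₂ * Y.2) := by
        rw [← integral_const_mul]
        congr 1 with Y
        rw [← Complex.exp_add, ← Complex.exp_add]
        ring_nf
    _ = π / b * cexp ((c₁ ^ 2 + c₂ ^ 2) / (4 * b) + d) := by
        rw [Measure.volume_eq_prod, integral_prod_mul (fun u : ℝ ↦ cexp (-b * u ^ 2 + c₁ * u))
          (fun u : ℝ ↦ cexp (-b * u ^ 2 + c₂ * u)), integral_line, integral_line, mul_mul_mul_comm,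
          ← cpow_add _ _ hπb, add_halves, cpow_one, ← Complex.exp_add, add_div, Complex.exp_add _ d]
        ring

lemma ofReal_gaussianSymbol (ℏ : ℝ) (x : ℝ × ℝ) :
    (gaussianSymbol ℏ x : ℂ) = 2 * cexp (-((x.1 : ℂ) ^ 2 + (x.2 : ℂ) ^ 2) / ℏ) := by
  simp [gaussianSymbol]

lemma integral_gaussianSymbol_add_mul_cexp_symplecticForm {ℏ : ℝ} (hℏ : 0 < ℏ) (X Z : ℝ × ℝ) :
    ∫ Y : ℝ × ℝ, (gaussianSymbol ℏ (X + Y) : ℂ) * cexp (2 * I / ℏ * symplecticForm Y Z)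
      = π * ℏ * (gaussianSymbol ℏ Z * cexp (2 * I / ℏ * symplecticForm Z X)) := by
  have hℏ' : (ℏ : ℂ) ≠ 0 := ofReal_ne_zero.mpr hℏ.ne'
  calc ∫ Y : ℝ × ℝ, (gaussianSymbol ℏ (X + Y) : ℂ) * cexp (2 * I / ℏ * symplecticForm Y Z)
      = 2 * ∫ Y : ℝ × ℝ, cexp (-(ℏ : ℂ)⁻¹ * ((Y.1 : ℂ) ^ 2 + (Y.2 : ℂ) ^ 2)
          + (-2 * X.1 + 2 * I * Z.2) / ℏ * Y.1 + (-2 * X.2 - 2 * I * Z.1) / ℏ * Y.2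
          + -((X.1 : ℂ) ^ 2 + (X.2 : ℂ) ^ 2) / ℏ) := by
        rw [← integral_const_mul]
        congr 1 with Y
        rw [ofReal_gaussianSymbol, mul_assoc, ← Complex.exp_add, symplecticForm]
        push_cast [Prod.fst_add, Prod.snd_add]
        congr 2
        field_simp
        ring
    _ = π * ℏ * (gaussianSymbol ℏ Z * cexp (2 * I / ℏ * symplecticForm Z X)) := by
        rw [integral_cexp_quadratic_prod (by simpa using hℏ), ofReal_gaussianSymbol,
          mul_assoc 2 (cexp _), ← Complex.exp_add, div_inv_eq_mul, mul_left_comm, symplecticForm]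
        congr 3
        push_cast
        field_simp
        linear_combination (4 * (Z.1 : ℂ) ^ 2 + 4 * (Z.2 : ℂ) ^ 2) * I_sq

lemma integral_gaussianSymbol_add_mul_gaussianSymbol_mul_cexp {ℏ : ℝ} (hℏ : 0 < ℏ) (X : ℝ × ℝ) :
    ∫ Z : ℝ × ℝ, (gaussianSymbol ℏ (X + Z) : ℂ) *
        (gaussianSymbol ℏ Z * cexp (2 * I / ℏ * symplecticForm Z X))
      = π * ℏ * gaussianSymbol ℏ X := by
  have hℏ' : (ℏ : ℂ) ≠ 0 := ofReal_ne_zero.mpr hℏ.ne'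
  have isotropic : ((-2 * X.1 + 2 * I * X.2) / ℏ) ^ 2 + ((-2 * X.2 - 2 * I * X.1) / ℏ) ^ 2 = 0 := by
    field_simp
    linear_combination (4 * (X.1 : ℂ) ^ 2 + 4 * (X.2 : ℂ) ^ 2) * I_sq
  calc ∫ Z : ℝ × ℝ, (gaussianSymbol ℏ (X + Z) : ℂ) *
        (gaussianSymbol ℏ Z * cexp (2 * I / ℏ * symplecticForm Z X))
      = 4 * ∫ Z : ℝ × ℝ, cexp (-(2 / ℏ : ℂ) * ((Z.1 : ℂ) ^ 2 + (Z.2 : ℂ) ^ 2)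
          + (-2 * X.1 + 2 * I * X.2) / ℏ * Z.1 + (-2 * X.2 - 2 * I * X.1) / ℏ * Z.2
          + -((X.1 : ℂ) ^ 2 + (X.2 : ℂ) ^ 2) / ℏ) := by
        rw [← integral_const_mul]
        congr 1 with Z
        rw [ofReal_gaussianSymbol, ofReal_gaussianSymbol, ← mul_assoc, mul_mul_mul_comm,
          ← Complex.exp_add, mul_assoc, ← Complex.exp_add, symplecticForm]
        push_cast [Prod.fst_add, Prod.snd_add]
        congr 2
        · norm_num
        field_simp
        ring
    _ = 4 * (π / (2 / ℏ) * cexp (0 / (4 * (2 / ℏ)) + -((X.1 : ℂ) ^ 2 + (X.2 : ℂ) ^ 2) / ℏ)) := by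
        rw [integral_cexp_quadratic_prod (by simpa using hℏ), isotropic]
    _ = π * ℏ * gaussianSymbol ℏ X := by
        rw [zero_div, zero_add, ofReal_gaussianSymbol]
        field_simp
        ring

/-- **The Gaussian symbol is a Moyal idempotent**: `Γ ♯_h Γ = Γ`. -/
theorem gaussianSymbol_moyal_idempotent (ℏ : ℝ) (hℏ : 0 < ℏ) :
    ∀ X : ℝ × ℝ,
      (((1 / (Real.pi * ℏ)) ^ 2 : ℝ) : ℂ) *
        ∫ Z : ℝ × ℝ, ∫ Y : ℝ × ℝ,
          ((gaussianSymbol ℏ (X + Z) : ℝ) : ℂ) * ((gaussianSymbol ℏ (X + Y) : ℝ) : ℂ) *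
            Complex.exp (2 * Complex.I / (ℏ : ℂ) * ((symplecticForm Y Z : ℝ) : ℂ))
      = ((gaussianSymbol ℏ X : ℝ) : ℂ) := by
  intro X
  have inner (Z : ℝ × ℝ) :
      ∫ Y : ℝ × ℝ, (gaussianSymbol ℏ (X + Z) : ℂ) * gaussianSymbol ℏ (X + Y) *
          cexp (2 * I / ℏ * symplecticForm Y Z)
        = π * ℏ * ((gaussianSymbol ℏ (X + Z) : ℂ) *
          (gaussianSymbol ℏ Z * cexp (2 * I / ℏ * symplecticForm Z X))) := by
    simp_rw [mul_assoc, integral_const_mul, integral_gaussianSymbol_add_mul_cexp_symplecticForm hℏ]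
    ring
  have hℏ' : (ℏ : ℂ) ≠ 0 := ofReal_ne_zero.mpr hℏ.ne'
  simp_rw [inner, integral_const_mul, integral_gaussianSymbol_add_mul_gaussianSymbol_mul_cexp hℏ]
  push_cast
  field_simp
end

section
/- (Gaussian smoothing remainder estimate.) Let δ ∈ [0, 1/2] and let (C_k)_{k∈ℕ} be nonnegative constants. For ℏ ∈ (0,1] and a smooth a : ℝ² → ℝ with sup_x ‖iteratedFDeriv ℝ k a x‖ ≤ C_k ℏ^{−δk} for all k, define the Gaussian regularization (a ⋆ Γ)(X) = (1/(πℏ)) ∫_{ℝ²} a(X + Y) e^{−‖Y‖²/ℏ} dY. Then for every m ∈ ℕ there is a constant C'_m, depending only on m and (C_k), such that sup_X ‖iteratedFDeriv ℝ m (a ⋆ Γ − a) X‖ ≤ C'_m ℏ^{1−2δ} ℏ^{−δ m}. In particular ‖a ⋆ Γ − a‖_{C⁰} ≤ C'₀ ℏ^{1−2δ}. -/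
open MeasureTheory Real Metric

set_option synthInstance.maxHeartbeats 1000000
set_option maxHeartbeats 2000000

noncomputable section GaussAux

/-- The Gaussian integral over `ℝ²`. -/
lemma gauss_int {c : ℝ} (hc : 0 < c) :
    ∫ Y : ℝ × ℝ, rexp (-(Y.1 ^ 2 + Y.2 ^ 2) / c) = π * c := by
  have h : (fun Y : ℝ × ℝ => rexp (-(Y.1 ^ 2 + Y.2 ^ 2) / c))
      = fun Y : ℝ × ℝ => rexp (-(1/c) * Y.1 ^ 2) * rexp (-(1/c) * Y.2 ^ 2) := by
    funext Y; rw [← Real.exp_add]; ring_nf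
  rw [h, Measure.volume_eq_prod,
    integral_prod_mul (f := fun x : ℝ => rexp (-(1/c) * x ^ 2))
      (g := fun x : ℝ => rexp (-(1/c) * x ^ 2)),
    integral_gaussian, Real.mul_self_sqrt (by positivity)]
  field_simp

lemma gauss_integrable {c : ℝ} (hc : 0 < c) :
    Integrable (fun Y : ℝ × ℝ => rexp (-(Y.1 ^ 2 + Y.2 ^ 2) / c)) := by
  have h : (fun Y : ℝ × ℝ => rexp (-(Y.1 ^ 2 + Y.2 ^ 2) / c))
      = fun Y : ℝ × ℝ => rexp (-(1/c) * Y.1 ^ 2) * rexp (-(1/c) * Y.2 ^ 2) := by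
    funext Y; rw [← Real.exp_add]; ring_nf
  rw [h, Measure.volume_eq_prod]
  exact (integrable_exp_neg_mul_sq (by positivity)).mul_prod
    (integrable_exp_neg_mul_sq (by positivity))

lemma norm_sq_le_pair (Y : ℝ × ℝ) : ‖Y‖ ^ 2 ≤ Y.1 ^ 2 + Y.2 ^ 2 := by
  have h : ‖Y‖ = max ‖Y.1‖ ‖Y.2‖ := rfl
  rcases max_cases ‖Y.1‖ ‖Y.2‖ with ⟨h1, _⟩ | ⟨h1, _⟩ <;> rw [h, h1, Real.norm_eq_abs, sq_abs]
  · nlinarith [sq_nonneg Y.2]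
  · nlinarith [sq_nonneg Y.1]

lemma sq_mul_gauss_le {ℏ : ℝ} (hℏ : 0 < ℏ) (Y : ℝ × ℝ) :
    (Y.1 ^ 2 + Y.2 ^ 2) * rexp (-(Y.1 ^ 2 + Y.2 ^ 2) / ℏ)
      ≤ ℏ * rexp (-(Y.1 ^ 2 + Y.2 ^ 2) / (2 * ℏ)) := by
  set s : ℝ := Y.1 ^ 2 + Y.2 ^ 2 with hs
  have hs0 : 0 ≤ s := by positivity
  have hkey : s / ℏ ≤ rexp (s / (2 * ℏ)) := by
    have h4 := Real.add_one_le_exp (s / (4 * ℏ))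
    have hsq : rexp (s / (4 * ℏ)) * rexp (s / (4 * ℏ)) = rexp (s / (2 * ℏ)) := by
      rw [← Real.exp_add]; congr 1; field_simp; ring
    have hq : 0 ≤ s / (4 * ℏ) := by positivity
    have h44 : s / ℏ = 4 * (s / (4 * ℏ)) := by field_simp
    rw [h44]
    nlinarith [sq_nonneg (s / (4 * ℏ) - 1), Real.exp_nonneg (s / (4 * ℏ))]
  have hmul : rexp (s / (2 * ℏ)) * rexp (-s / ℏ) = rexp (-s / (2 * ℏ)) := by
    rw [← Real.exp_add]; congr 1; field_simp; ring
  have hc : ℏ * (s / ℏ) = s := by field_simp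
  calc s * rexp (-s / ℏ) = ℏ * (s / ℏ * rexp (-s / ℏ)) := by rw [← mul_assoc, hc]
    _ ≤ ℏ * (rexp (s / (2 * ℏ)) * rexp (-s / ℏ)) :=
        mul_le_mul_of_nonneg_left
          (mul_le_mul_of_nonneg_right hkey (Real.exp_nonneg _)) hℏ.le
    _ = ℏ * rexp (-s / (2 * ℏ)) := by rw [hmul]

variable {E : Type*} [NormedAddCommGroup E] [NormedSpace ℝ E] [CompleteSpace E]

lemma int_smul_bdd (g : ℝ × ℝ → ℝ) (hgc : Continuous g) (hg0 : ∀ Y, 0 ≤ g Y)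
    (hgi : Integrable g) (b : ℝ × ℝ → E) (hbc : Continuous b) (M : ℝ)
    (hM : ∀ x, ‖b x‖ ≤ M) (X : ℝ × ℝ) :
    Integrable (fun Y : ℝ × ℝ => g Y • b (X + Y)) := by
  refine (hgi.const_mul M).mono'
    ((hgc.smul (hbc.comp (continuous_const.add continuous_id))).aestronglyMeasurable) ?_
  refine Filter.Eventually.of_forall fun Y => ?_
  calc ‖g Y • b (X + Y)‖ ≤ ‖g Y‖ * ‖b (X + Y)‖ := norm_smul_le _ _
    _ = g Y * ‖b (X + Y)‖ := by rw [Real.norm_eq_abs, abs_of_nonneg (hg0 Y)]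
    _ ≤ g Y * M := mul_le_mul_of_nonneg_left (hM _) (hg0 Y)
    _ = M * g Y := mul_comm _ _

lemma onestep (g : ℝ × ℝ → ℝ) (hgc : Continuous g) (hg0 : ∀ Y, 0 ≤ g Y)
    (hgi : Integrable g) (b : ℝ × ℝ → E) (hb : Differentiable ℝ b)
    (hbc : Continuous b) (hfc : Continuous (fderiv ℝ b))
    (M M' : ℝ) (hM : ∀ x, ‖b x‖ ≤ M) (hM' : ∀ x, ‖fderiv ℝ b x‖ ≤ M') (X : ℝ × ℝ) :
    HasFDerivAt (fun x => ∫ Y : ℝ × ℝ, g Y • b (x + Y))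
      (∫ Y : ℝ × ℝ, g Y • fderiv ℝ b (X + Y)) X := by
  have hdiff : ∀ (x Y : ℝ × ℝ),
      HasFDerivAt (fun x => g Y • b (x + Y)) (g Y • fderiv ℝ b (x + Y)) x := by
    intro x Y
    have h1 : HasFDerivAt (fun x : ℝ × ℝ => x + Y) (ContinuousLinearMap.id ℝ (ℝ × ℝ)) x :=
      (hasFDerivAt_id x).add_const Y
    have h2 : HasFDerivAt b (fderiv ℝ b (x + Y)) (x + Y) := (hb (x + Y)).hasFDerivAt
    have := (h2.comp x h1).const_smul (g Y)
    rw [ContinuousLinearMap.comp_id] at this; exact this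
  apply hasFDerivAt_integral_of_dominated_of_fderiv_le (s := Metric.ball X 1)
    (F := fun x (Y : ℝ × ℝ) => g Y • b (x + Y))
    (F' := fun x (Y : ℝ × ℝ) => g Y • fderiv ℝ b (x + Y))
    (bound := fun Y => M' * g Y) (Metric.ball_mem_nhds X one_pos)
  · exact Filter.Eventually.of_forall fun x =>
      (hgc.smul (hbc.comp (continuous_const.add continuous_id))).aestronglyMeasurable
  · exact int_smul_bdd g hgc hg0 hgi b hbc M hM X
  · exact (hgc.smul (hfc.comp (continuous_const.add continuous_id))).aestronglyMeasurable
  · refine Filter.Eventually.of_forall fun Y => fun x _ => ?_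
    calc ‖g Y • fderiv ℝ b (x + Y)‖ ≤ ‖g Y‖ * ‖fderiv ℝ b (x + Y)‖ :=
          ContinuousLinearMap.opNorm_smul_le _ _
      _ = g Y * ‖fderiv ℝ b (x + Y)‖ := by rw [Real.norm_eq_abs, abs_of_nonneg (hg0 Y)]
      _ ≤ g Y * M' := mul_le_mul_of_nonneg_left (hM' _) (hg0 Y)
      _ = M' * g Y := mul_comm _ _
  · exact hgi.const_mul M'
  · exact Filter.Eventually.of_forall fun Y x _ => hdiff x Y

end GaussAux

section IterAux

lemma iter_cont {a : ℝ × ℝ → ℝ} (ha : ContDiff ℝ (⊤ : ℕ∞) a) (m : ℕ) :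
    Continuous (iteratedFDeriv ℝ m a) :=
  ha.continuous_iteratedFDeriv (by exact_mod_cast le_top)

lemma iter_diff {a : ℝ × ℝ → ℝ} (ha : ContDiff ℝ (⊤ : ℕ∞) a) (m : ℕ) :
    Differentiable ℝ (iteratedFDeriv ℝ m a) :=
  (ha.iteratedFDeriv_right (m := 1) (by exact_mod_cast le_top)).differentiable one_ne_zero

lemma iter_fderiv_cont {a : ℝ × ℝ → ℝ} (ha : ContDiff ℝ (⊤ : ℕ∞) a) (m : ℕ) :
    Continuous (fderiv ℝ (iteratedFDeriv ℝ m a)) := by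
  rw [fderiv_iteratedFDeriv]
  exact (continuousMultilinearCurryLeftEquiv ℝ
    (fun _ : Fin (m + 1) => ℝ × ℝ) ℝ).continuous.comp (iter_cont ha (m + 1))

lemma iter_fderiv_norm (a : ℝ × ℝ → ℝ) (m : ℕ) (x : ℝ × ℝ) :
    ‖fderiv ℝ (iteratedFDeriv ℝ m a) x‖ = ‖iteratedFDeriv ℝ (m + 1) a x‖ := by
  rw [fderiv_iteratedFDeriv]
  simp [LinearIsometryEquiv.norm_map]

lemma iter_fderiv_sub_norm (a : ℝ × ℝ → ℝ) (m : ℕ) (z w : ℝ × ℝ) :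
    ‖fderiv ℝ (iteratedFDeriv ℝ m a) z - fderiv ℝ (iteratedFDeriv ℝ m a) w‖
      = ‖iteratedFDeriv ℝ (m + 1) a z - iteratedFDeriv ℝ (m + 1) a w‖ := by
  rw [fderiv_iteratedFDeriv]
  simp only [Function.comp_apply]
  rw [← (continuousMultilinearCurryLeftEquiv ℝ (fun _ : Fin (m + 1) => ℝ × ℝ) ℝ).map_sub,
    LinearIsometryEquiv.norm_map]

end IterAux

section Swap

lemma swap_lemma (g : ℝ × ℝ → ℝ) (hgc : Continuous g) (hg0 : ∀ Y, 0 ≤ g Y)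
    (hgi : Integrable g) (a : ℝ × ℝ → ℝ) (ha : ContDiff ℝ (⊤ : ℕ∞) a)
    (hb : ∀ k : ℕ, ∃ M : ℝ, ∀ x, ‖iteratedFDeriv ℝ k a x‖ ≤ M) :
    ∀ (m : ℕ) (X : ℝ × ℝ),
      iteratedFDeriv ℝ m (fun x => ∫ Y : ℝ × ℝ, g Y • a (x + Y)) X
        = ∫ Y : ℝ × ℝ, g Y • iteratedFDeriv ℝ m a (X + Y) := by
  intro m
  induction m with
  | zero =>
    intro X
    set L := (continuousMultilinearCurryFin0 ℝ (ℝ × ℝ) ℝ).symm.toLinearIsometry with hL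
    have h3 : ∀ Y : ℝ × ℝ, g Y • iteratedFDeriv ℝ 0 a (X + Y) = L (g Y • a (X + Y)) := by
      intro Y
      rw [L.map_smul]
      rfl
    show L (∫ Y : ℝ × ℝ, g Y • a (X + Y)) = _
    rw [integral_congr_ae (Filter.Eventually.of_forall h3)]
    exact (L.integral_comp_comm _).symm
  | succ m IH =>
    intro X
    obtain ⟨M, hM⟩ := hb m
    obtain ⟨M', hM'⟩ := hb (m + 1)
    have hfM : ∀ x, ‖fderiv ℝ (iteratedFDeriv ℝ m a) x‖ ≤ M' := fun x => by
      rw [iter_fderiv_norm]; exact hM' x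
    have hstep := onestep g hgc hg0 hgi (iteratedFDeriv ℝ m a) (iter_diff ha m)
      (iter_cont ha m) (iter_fderiv_cont ha m) M M' hM hfM X
    have hfun : iteratedFDeriv ℝ m (fun x => ∫ Y : ℝ × ℝ, g Y • a (x + Y))
        = fun x => ∫ Y : ℝ × ℝ, g Y • iteratedFDeriv ℝ m a (x + Y) := funext IH
    have hfder : fderiv ℝ (iteratedFDeriv ℝ m (fun x => ∫ Y : ℝ × ℝ, g Y • a (x + Y))) X
        = ∫ Y : ℝ × ℝ, g Y • fderiv ℝ (iteratedFDeriv ℝ m a) (X + Y) := by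
      rw [hfun]; exact hstep.fderiv
    set L := (continuousMultilinearCurryLeftEquiv ℝ
      (fun _ : Fin (m + 1) => ℝ × ℝ) ℝ).symm.toLinearIsometry with hL
    have h3 : ∀ Y : ℝ × ℝ, L (g Y • fderiv ℝ (iteratedFDeriv ℝ m a) (X + Y))
        = g Y • iteratedFDeriv ℝ (m + 1) a (X + Y) := by
      intro Y
      rw [L.map_smul]
      rfl
    calc iteratedFDeriv ℝ (m + 1) (fun x => ∫ Y : ℝ × ℝ, g Y • a (x + Y)) X
        = L (fderiv ℝ (iteratedFDeriv ℝ m (fun x => ∫ Y : ℝ × ℝ, g Y • a (x + Y))) X) := rfl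
      _ = L (∫ Y : ℝ × ℝ, g Y • fderiv ℝ (iteratedFDeriv ℝ m a) (X + Y)) := by rw [hfder]
      _ = ∫ Y : ℝ × ℝ, L (g Y • fderiv ℝ (iteratedFDeriv ℝ m a) (X + Y)) :=
          (LinearIsometry.integral_comp_comm (𝕜 := ℝ) (E := ℝ × ℝ →L[ℝ] ℝ × ℝ [×m]→L[ℝ] ℝ)
            (F := ContinuousMultilinearMap ℝ (fun _ : Fin (m + 1) => ℝ × ℝ) ℝ) (μ := volume) L
            (fun Y : ℝ × ℝ => g Y • fderiv ℝ (iteratedFDeriv ℝ m a) (X + Y))).symm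
      _ = ∫ Y : ℝ × ℝ, g Y • iteratedFDeriv ℝ (m + 1) a (X + Y) :=
          integral_congr_ae (Filter.Eventually.of_forall h3)

end Swap

section Core

variable {E : Type*} [NormedAddCommGroup E] [NormedSpace ℝ E] [CompleteSpace E]

lemma taylor_bound (b : ℝ × ℝ → E) (hb : Differentiable ℝ b) (M : ℝ) (hM : 0 ≤ M)
    (hLip : ∀ z w, ‖fderiv ℝ b z - fderiv ℝ b w‖ ≤ M * ‖z - w‖) (X Y : ℝ × ℝ) :
    ‖b (X + Y) - b X - fderiv ℝ b X Y‖ ≤ M * ‖Y‖ ^ 2 := by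
  set φ : ℝ × ℝ → E := fun z => b z - fderiv ℝ b X z with hφ
  have hφd : ∀ z, DifferentiableAt ℝ φ z := fun z =>
    (hb z).sub (fderiv ℝ b X).differentiableAt
  have hφf : ∀ z, fderiv ℝ φ z = fderiv ℝ b z - fderiv ℝ b X := by
    intro z
    rw [hφ, fderiv_fun_sub (hb z) (fderiv ℝ b X).differentiableAt,
      ContinuousLinearMap.fderiv]
  have key := Convex.norm_image_sub_le_of_norm_fderiv_le
    (f := φ) (s := Metric.closedBall X ‖Y‖) (C := M * ‖Y‖)
    (fun z _ => hφd z)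
    (fun z hz => by
      rw [hφf z]
      have hzX : ‖z - X‖ ≤ ‖Y‖ := by
        rw [← dist_eq_norm]; exact Metric.mem_closedBall.mp hz
      calc ‖fderiv ℝ b z - fderiv ℝ b X‖ ≤ M * ‖z - X‖ := hLip z X
        _ ≤ M * ‖Y‖ := mul_le_mul_of_nonneg_left hzX hM)
    (convex_closedBall X ‖Y‖) (Metric.mem_closedBall_self (norm_nonneg Y))
    (by rw [Metric.mem_closedBall, dist_eq_norm, add_sub_cancel_left])
  have hφeq : φ (X + Y) - φ X = b (X + Y) - b X - fderiv ℝ b X Y := by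
    simp only [hφ]
    have h : fderiv ℝ b X (X + Y) - fderiv ℝ b X X = fderiv ℝ b X Y := by
      rw [← map_sub]; congr 1; abel
    rw [sub_sub_sub_comm, h]
  calc ‖b (X + Y) - b X - fderiv ℝ b X Y‖ = ‖φ (X + Y) - φ X‖ := by rw [hφeq]
    _ ≤ M * ‖Y‖ * ‖X + Y - X‖ := key
    _ = M * ‖Y‖ ^ 2 := by rw [add_sub_cancel_left]; ring

lemma core_estimate {ℏ : ℝ} (hℏ : 0 < ℏ) (b : ℝ × ℝ → E)
    (hbd : Differentiable ℝ b) (hbc : Continuous b)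
    (M0 : ℝ) (hM0 : ∀ x, ‖b x‖ ≤ M0) (M : ℝ) (hM : 0 ≤ M)
    (hLip : ∀ z w, ‖fderiv ℝ b z - fderiv ℝ b w‖ ≤ M * ‖z - w‖) (X : ℝ × ℝ) :
    ‖(1 / (π * ℏ)) • (∫ Y : ℝ × ℝ, rexp (-(Y.1 ^ 2 + Y.2 ^ 2) / ℏ) • b (X + Y)) - b X‖
      ≤ 2 * M * ℏ := by
  set g : ℝ × ℝ → ℝ := fun Y => rexp (-(Y.1 ^ 2 + Y.2 ^ 2) / ℏ) with hgdef
  have hgc : Continuous g := by fun_prop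
  have hg0 : ∀ Y, 0 ≤ g Y := fun Y => (Real.exp_pos _).le
  have hgi : Integrable g := gauss_integrable hℏ
  have hg2i : Integrable (fun Y : ℝ × ℝ => rexp (-(Y.1 ^ 2 + Y.2 ^ 2) / (2 * ℏ))) :=
    gauss_integrable (by positivity)
  set L : (ℝ × ℝ) →L[ℝ] E := fderiv ℝ b X with hLdef
  have hint1 : Integrable (fun Y : ℝ × ℝ => g Y • b (X + Y)) :=
    int_smul_bdd g hgc hg0 hgi b hbc M0 hM0 X
  have hint2 : Integrable (fun Y : ℝ × ℝ => g Y • b X) := hgi.smul_const _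
  have hbound : ∀ Y : ℝ × ℝ, g Y * ‖Y‖ ≤ g Y + ℏ * rexp (-(Y.1 ^ 2 + Y.2 ^ 2) / (2 * ℏ)) := by
    intro Y
    have h1 : ‖Y‖ ≤ 1 + ‖Y‖ ^ 2 := by nlinarith [sq_nonneg (‖Y‖ - 1), norm_nonneg Y]
    have h2 : ‖Y‖ ^ 2 ≤ Y.1 ^ 2 + Y.2 ^ 2 := norm_sq_le_pair Y
    have h3 := sq_mul_gauss_le hℏ Y
    nlinarith [hg0 Y, mul_le_mul_of_nonneg_left h1 (hg0 Y),
      mul_le_mul_of_nonneg_left h2 (hg0 Y)]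
  have hintL : Integrable (fun Y : ℝ × ℝ => g Y • L Y) := by
    refine ((hgi.add (hg2i.const_mul ℏ)).const_mul ‖L‖).mono'
      ((hgc.smul L.continuous).aestronglyMeasurable) ?_
    refine Filter.Eventually.of_forall fun Y => ?_
    calc ‖g Y • L Y‖ ≤ ‖g Y‖ * ‖L Y‖ := norm_smul_le _ _
      _ = g Y * ‖L Y‖ := by rw [Real.norm_eq_abs, abs_of_nonneg (hg0 Y)]
      _ ≤ g Y * (‖L‖ * ‖Y‖) := mul_le_mul_of_nonneg_left (L.le_opNorm Y) (hg0 Y)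
      _ = ‖L‖ * (g Y * ‖Y‖) := by ring
      _ ≤ ‖L‖ * (g Y + ℏ * rexp (-(Y.1 ^ 2 + Y.2 ^ 2) / (2 * ℏ))) :=
          mul_le_mul_of_nonneg_left (hbound Y) (norm_nonneg L)
  have h0 : (∫ Y : ℝ × ℝ, g Y • L Y) = 0 := by
    have hodd : ∀ Y : ℝ × ℝ, g (-Y) • L (-Y) = -(g Y • L Y) := by
      intro Y
      have hge : g (-Y) = g Y := by simp [hgdef]
      rw [hge, map_neg, smul_neg]
    have hneg := integral_neg_eq_self (fun Y : ℝ × ℝ => g Y • L Y) volume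
    have heq : (∫ Y : ℝ × ℝ, g (-Y) • L (-Y)) = ∫ Y : ℝ × ℝ, -(g Y • L Y) :=
      integral_congr_ae (Filter.Eventually.of_forall hodd)
    rw [heq, integral_neg] at hneg
    have h2 : (2 : ℝ) • (∫ Y : ℝ × ℝ, g Y • L Y) = 0 := by
      rw [two_smul]
      nth_rewrite 1 [← hneg]
      exact neg_add_cancel _
    simpa using (smul_eq_zero.mp h2).resolve_left (by norm_num)
  have hsplit : (1 / (π * ℏ)) • (∫ Y : ℝ × ℝ, g Y • b (X + Y)) - b X
      = (1 / (π * ℏ)) • ∫ Y : ℝ × ℝ, g Y • (b (X + Y) - b X - L Y) := by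
    have hdecomp : (∫ Y : ℝ × ℝ, g Y • (b (X + Y) - b X - L Y))
        = (∫ Y : ℝ × ℝ, g Y • b (X + Y)) - (∫ Y : ℝ × ℝ, g Y • b X)
          - ∫ Y : ℝ × ℝ, g Y • L Y := by
      have e1 : (∫ Y : ℝ × ℝ, g Y • (b (X + Y) - b X - L Y))
          = ∫ Y : ℝ × ℝ, (g Y • b (X + Y) - g Y • b X) - g Y • L Y :=
        integral_congr_ae (Filter.Eventually.of_forall fun Y => by simp [smul_sub])
      have hint12 : Integrable (fun Y : ℝ × ℝ => g Y • b (X + Y) - g Y • b X) :=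
        hint1.sub hint2
      rw [e1, integral_sub hint12 hintL, integral_sub hint1 hint2]
    rw [hdecomp, h0, sub_zero, integral_smul_const, gauss_int hℏ, smul_sub, smul_smul]
    have hone : (1 / (π * ℏ)) * (π * ℏ) = 1 := by
      have : π * ℏ ≠ 0 := by positivity
      field_simp
    rw [hone, one_smul]
  rw [hsplit]
  have hb2 : ∀ Y : ℝ × ℝ, ‖g Y • (b (X + Y) - b X - L Y)‖
      ≤ M * (ℏ * rexp (-(Y.1 ^ 2 + Y.2 ^ 2) / (2 * ℏ))) := by
    intro Y
    calc ‖g Y • (b (X + Y) - b X - L Y)‖ ≤ ‖g Y‖ * ‖b (X + Y) - b X - L Y‖ := norm_smul_le _ _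
      _ = g Y * ‖b (X + Y) - b X - L Y‖ := by rw [Real.norm_eq_abs, abs_of_nonneg (hg0 Y)]
      _ ≤ g Y * (M * ‖Y‖ ^ 2) :=
          mul_le_mul_of_nonneg_left (taylor_bound b hbd M hM hLip X Y) (hg0 Y)
      _ = M * (‖Y‖ ^ 2 * g Y) := by ring
      _ ≤ M * ((Y.1 ^ 2 + Y.2 ^ 2) * g Y) := mul_le_mul_of_nonneg_left
          (mul_le_mul_of_nonneg_right (norm_sq_le_pair Y) (hg0 Y)) hM
      _ ≤ M * (ℏ * rexp (-(Y.1 ^ 2 + Y.2 ^ 2) / (2 * ℏ))) :=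
          mul_le_mul_of_nonneg_left (sq_mul_gauss_le hℏ Y) hM
  have hnorm : ‖∫ Y : ℝ × ℝ, g Y • (b (X + Y) - b X - L Y)‖ ≤ M * (ℏ * (π * (2 * ℏ))) := by
    calc ‖∫ Y : ℝ × ℝ, g Y • (b (X + Y) - b X - L Y)‖
        ≤ ∫ Y : ℝ × ℝ, M * (ℏ * rexp (-(Y.1 ^ 2 + Y.2 ^ 2) / (2 * ℏ))) :=
          norm_integral_le_of_norm_le ((hg2i.const_mul ℏ).const_mul M)
            (Filter.Eventually.of_forall hb2)
      _ = M * (ℏ * ∫ Y : ℝ × ℝ, rexp (-(Y.1 ^ 2 + Y.2 ^ 2) / (2 * ℏ))) := by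
          rw [integral_const_mul, integral_const_mul]
      _ = M * (ℏ * (π * (2 * ℏ))) := by rw [gauss_int (by positivity)]
  calc ‖(1 / (π * ℏ)) • ∫ Y : ℝ × ℝ, g Y • (b (X + Y) - b X - L Y)‖
      = ‖(1 / (π * ℏ))‖ * ‖∫ Y : ℝ × ℝ, g Y • (b (X + Y) - b X - L Y)‖ := norm_smul _ _
    _ ≤ (1 / (π * ℏ)) * (M * (ℏ * (π * (2 * ℏ)))) := by
        rw [Real.norm_eq_abs, abs_of_nonneg (by positivity)]
        exact mul_le_mul_of_nonneg_left hnorm (by positivity)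
    _ = 2 * M * ℏ := by
        have : π * ℏ ≠ 0 := by positivity
        field_simp

end Core

/-- The Gaussian regularization `(a ⋆ Γ)(X) = (1/(πℏ)) ∫ a(X+Y) e^{-|Y|²/ℏ} dY` of a
symbol `a` on `ℝ²`. -/
noncomputable def gaussianSmoothing (ℏ : ℝ) (a : ℝ × ℝ → ℝ) (X : ℝ × ℝ) : ℝ :=
  (1 / (Real.pi * ℏ)) * ∫ Y : ℝ × ℝ, a (X + Y) * Real.exp (-(Y.1 ^ 2 + Y.2 ^ 2) / ℏ)

/-- **Gaussian smoothing remainder estimate.** If `a` is a real symbol of class `S_δ⁰`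
(derivative bounds `C k * ℏ^(-δ k)`), then all derivatives of `a ⋆ Γ - a` are
`O(ℏ^(1-2δ) ℏ^(-δ m))`, with constants depending only on `m` and the `C k`. -/
theorem gaussianSmoothing_remainder_estimate (δ : ℝ) (hδ0 : 0 ≤ δ) (hδ : δ ≤ 1 / 2)
    (C : ℕ → ℝ) (hC : ∀ k, 0 ≤ C k) :
    ∀ m : ℕ, ∃ C' : ℝ,
      ∀ ℏ : ℝ, 0 < ℏ → ℏ ≤ 1 →
      ∀ a : ℝ × ℝ → ℝ, ContDiff ℝ (⊤ : ℕ∞) a →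
        (∀ k : ℕ, ∀ x, ‖iteratedFDeriv ℝ k a x‖ ≤ C k * ℏ ^ (-(δ * k))) →
      ∀ X : ℝ × ℝ,
        ‖iteratedFDeriv ℝ m (fun Y => gaussianSmoothing ℏ a Y - a Y) X‖
          ≤ C' * ℏ ^ (1 - 2 * δ) * ℏ ^ (-(δ * m)) := by
  intro m
  refine ⟨2 * C (m + 2), ?_⟩
  intro ℏ hℏ hℏ1 a ha hbd X
  set g : ℝ × ℝ → ℝ := fun Y => rexp (-(Y.1 ^ 2 + Y.2 ^ 2) / ℏ) with hgdef
  have hgc : Continuous g := by fun_prop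
  have hg0 : ∀ Y, 0 ≤ g Y := fun Y => (Real.exp_pos _).le
  have hgi : Integrable g := gauss_integrable hℏ
  set F : ℝ × ℝ → ℝ := fun x => ∫ Y : ℝ × ℝ, g Y • a (x + Y) with hFdef
  have hbM : ∀ k : ℕ, ∃ M : ℝ, ∀ x, ‖iteratedFDeriv ℝ k a x‖ ≤ M := fun k => ⟨_, hbd k⟩
  have hswap := swap_lemma g hgc hg0 hgi a ha hbM
  have hFdiff : ∀ i : ℕ, Differentiable ℝ (iteratedFDeriv ℝ i F) := by
    intro i
    have h : iteratedFDeriv ℝ i F = fun x => ∫ Y : ℝ × ℝ, g Y • iteratedFDeriv ℝ i a (x + Y) :=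
      funext (hswap i)
    rw [h]
    intro x
    obtain ⟨M, hM⟩ := hbM i
    obtain ⟨M', hM'⟩ := hbM (i + 1)
    exact (onestep g hgc hg0 hgi _ (iter_diff ha i) (iter_cont ha i) (iter_fderiv_cont ha i)
      M M' hM (fun z => by rw [iter_fderiv_norm]; exact hM' z) x).differentiableAt
  have hFsm : ContDiff ℝ m F := by
    have h := contDiff_of_differentiable_iteratedFDeriv (n := (m : ℕ∞)) (fun k _ => hFdiff k)
    exact h.of_le (by exact_mod_cast le_refl _)
  have heq : (fun Y => gaussianSmoothing ℏ a Y - a Y) = (1 / (π * ℏ)) • F + (-a) := by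
    funext x
    simp only [Pi.add_apply, Pi.smul_apply, Pi.neg_apply, smul_eq_mul, gaussianSmoothing,
      hFdef, hgdef]
    rw [sub_eq_add_neg]
    congr 2
    exact integral_congr_ae (Filter.Eventually.of_forall fun Y => mul_comm _ _)
  have h1 : ContDiff ℝ (m : ℕ) ((1 / (π * ℏ)) • F) := by exact hFsm.const_smul (1 / (π * ℏ))
  have h2 : ContDiff ℝ (m : ℕ) (-a : ℝ × ℝ → ℝ) := by exact (ha.of_le (by exact_mod_cast le_top)).neg
  rw [heq, iteratedFDeriv_add_apply h1.contDiffAt h2.contDiffAt,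
    iteratedFDeriv_const_smul_apply hFsm.contDiffAt, iteratedFDeriv_neg_apply, ← sub_eq_add_neg,
    hswap m X]
  set M : ℝ := C (m + 2) * ℏ ^ (-(δ * ((m : ℝ) + 2))) with hMdef
  have hMnn : 0 ≤ M := mul_nonneg (hC _) (Real.rpow_nonneg hℏ.le _)
  have hM2 : ∀ x, ‖iteratedFDeriv ℝ (m + 2) a x‖ ≤ M := by
    intro x
    have h := hbd (m + 2) x
    have hcast : ((m + 2 : ℕ) : ℝ) = (m : ℝ) + 2 := by push_cast; ring
    rwa [hcast] at h
  have hLip : ∀ z w, ‖fderiv ℝ (iteratedFDeriv ℝ m a) z - fderiv ℝ (iteratedFDeriv ℝ m a) w‖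
      ≤ M * ‖z - w‖ := by
    intro z w
    rw [iter_fderiv_sub_norm]
    exact Convex.norm_image_sub_le_of_norm_fderiv_le
      (fun x _ => (iter_diff ha (m + 1)).differentiableAt)
      (fun x _ => by rw [iter_fderiv_norm]; exact hM2 x)
      convex_univ (Set.mem_univ w) (Set.mem_univ z)
  have hcore := core_estimate hℏ (iteratedFDeriv ℝ m a) (iter_diff ha m) (iter_cont ha m)
    _ (hbd m) M hMnn hLip X
  have hfinal : 2 * M * ℏ = 2 * C (m + 2) * ℏ ^ (1 - 2 * δ) * ℏ ^ (-(δ * (m : ℝ))) := by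
    have hexp : ℏ ^ (1 - 2 * δ) * ℏ ^ (-(δ * (m : ℝ))) = ℏ ^ (-(δ * ((m : ℝ) + 2))) * ℏ ^ (1 : ℝ) := by
      rw [← Real.rpow_add hℏ, ← Real.rpow_add hℏ]
      ring_nf
    calc 2 * M * ℏ = 2 * C (m + 2) * (ℏ ^ (-(δ * ((m : ℝ) + 2))) * ℏ ^ (1 : ℝ)) := by
          rw [Real.rpow_one, hMdef]; ring
      _ = 2 * C (m + 2) * (ℏ ^ (1 - 2 * δ) * ℏ ^ (-(δ * (m : ℝ)))) := by rw [hexp]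
      _ = 2 * C (m + 2) * ℏ ^ (1 - 2 * δ) * ℏ ^ (-(δ * (m : ℝ))) := by ring
  calc ‖(1 / (π * ℏ)) • (∫ Y : ℝ × ℝ, g Y • iteratedFDeriv ℝ m a (X + Y))
        - iteratedFDeriv ℝ m a X‖ ≤ 2 * M * ℏ := hcore
    _ = 2 * C (m + 2) * ℏ ^ (1 - 2 * δ) * ℏ ^ (-(δ * (m : ℝ))) := hfinal
end

section
/- Let κ : 𝕋² → 𝕋² be continuous, let n ≥ 1 be an integer, and suppose the set F = {x ∈ 𝕋² : κ^[n] x = x} of n-periodic points satisfies μ(F) = 0. Then for every ε₀ > 0 there exist M ∈ ℕ and open sets D₀, D₁, …, D_M ⊆ 𝕋² such that 𝕋² = D₀ ∪ D₁ ∪ … ∪ D_M, F ⊆ D₀, μ(D₀) ≤ ε₀, and for each i = 1, …, M the image of D_i under κ^[n] is disjoint from D_i: κ^[n](D_i) ∩ D_i = ∅. -/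
open MeasureTheory
open scoped ENNReal

/-!
Away from the fixed points of `f = κ^[n]`, every point `x` has an open neighbourhood `V` with
`f '' V ∩ V = ∅`: separate `x` from `f x` by disjoint open sets `B ∋ x`, `A ∋ f x` and take
`V = B ∩ f⁻¹' A`. The fixed-point set is null, so by outer regularity it lies in an open set `D₀`
of measure at most `ε₀`; the compact complement of `D₀` is covered by finitely many such `V`.
-/

/-- The 2-torus `(ℝ/ℤ)²`. -/
abbrev Torus2 : Type := AddCircle (1 : ℝ) × AddCircle (1 : ℝ)

open Set Function Topology

variable {X : Type*} [TopologicalSpace X]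

theorem IsCompact.exists_nat_biUnion_cover {K : Set X} (hK : IsCompact K) {𝒰 : Set (Set X)}
    (h𝒰 : ∅ ∈ 𝒰) (hnhds : ∀ x ∈ K, ∃ V ∈ 𝒰, V ∈ 𝓝 x) :
    ∃ (m : ℕ) (V : ℕ → Set X), (∀ i, V i ∈ 𝒰) ∧ K ⊆ ⋃ i ≤ m, V i := by
  choose W hW𝒰 hWx using hnhds
  obtain ⟨t, hKt⟩ := hK.elim_nhds_subcover' W hWx
  let W' : K → Set X := fun y ↦ W y y.2
  let V : ℕ → Set X := fun i ↦ if h : i < t.card then W' (t.equivFin.symm ⟨i, h⟩) else ∅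
  refine ⟨t.card, V, fun i ↦ ?_, fun x hx ↦ ?_⟩
  · unfold V
    split_ifs
    exacts [hW𝒰 _ _, h𝒰]
  · obtain ⟨y, hyt, hxy⟩ := mem_iUnion₂.1 (hKt hx)
    have hVy : V (t.equivFin ⟨y, hyt⟩) = W' y := by simp [V]
    exact mem_biUnion (t.equivFin ⟨y, hyt⟩).2.le (hVy ▸ hxy)

variable [T2Space X] {f : X → X}

theorem Continuous.exists_isOpen_mem_disjoint_image_self (hf : Continuous f) {x : X}
    (hx : f x ≠ x) : ∃ V, IsOpen V ∧ x ∈ V ∧ Disjoint (f '' V) V := by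
  obtain ⟨A, B, hA, hB, hfxA, hxB, hAB⟩ := t2_separation hx
  refine ⟨B ∩ f ⁻¹' A, hB.inter (hA.preimage hf), ⟨hxB, hfxA⟩, ?_⟩
  exact hAB.mono (image_subset_iff.2 inter_subset_right) inter_subset_left

theorem Continuous.exists_nat_cover_compl_of_fixedPoints_subset [CompactSpace X]
    (hf : Continuous f) {U : Set X} (hU : IsOpen U) (hfix : fixedPoints f ⊆ U) :
    ∃ (m : ℕ) (V : ℕ → Set X), (∀ i, IsOpen (V i) ∧ Disjoint (f '' V i) (V i)) ∧
      Uᶜ ⊆ ⋃ i ≤ m, V i := by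
  refine hU.isClosed_compl.isCompact.exists_nat_biUnion_cover
    (𝒰 := {V | IsOpen V ∧ Disjoint (f '' V) V}) ⟨isOpen_empty, by simp⟩ fun x hx ↦ ?_
  obtain ⟨V, hVo, hxV, hV⟩ := hf.exists_isOpen_mem_disjoint_image_self fun h ↦ hx (hfix h)
  exact ⟨V, ⟨hVo, hV⟩, hVo.mem_nhds hxV⟩

theorem exists_open_cover_avoiding_periodic_points_general
    (κ : Torus2 → Torus2) (hκ : Continuous κ) (n : ℕ)
    (hF : (volume : Measure Torus2) {x : Torus2 | κ^[n] x = x} = 0) :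
    ∀ ε₀ : ℝ≥0∞, 0 < ε₀ →
      ∃ (M : ℕ) (D : ℕ → Set Torus2),
        (∀ i ≤ M, IsOpen (D i)) ∧
        (⋃ i ≤ M, D i) = Set.univ ∧
        {x : Torus2 | κ^[n] x = x} ⊆ D 0 ∧
        (volume : Measure Torus2) (D 0) ≤ ε₀ ∧
        ∀ i, 1 ≤ i → i ≤ M → (κ^[n] '' D i) ∩ D i = ∅ := by
  intro ε₀ hε₀
  obtain ⟨U, hFU, hUo, hUε₀⟩ := exists_isOpen_lt_of_lt _ ε₀ (hF ▸ hε₀)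
  obtain ⟨m, V, hV, hUcV⟩ := (hκ.iterate n).exists_nat_cover_compl_of_fixedPoints_subset hUo hFU
  refine ⟨m + 1, fun i ↦ Nat.casesOn i U V, ?_, ?_, hFU, hUε₀.le, ?_⟩
  · rintro (_ | i) -
    exacts [hUo, (hV i).1]
  · rw [biUnion_le_succ', ← univ_subset_iff, ← union_compl_self U]
    exact union_subset_union_right U hUcV
  · rintro (_ | i) hi -
    exacts [by omega, disjoint_iff_inter_eq_empty.1 (hV i).2]

/-- If the set `F` of `n`-periodic points of a continuous map `κ` of the torus is null,
then for every `ε₀ > 0` the torus can be covered by finitely many open sets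
`D₀, D₁, …, D_M` such that `F ⊆ D₀`, `μ(D₀) ≤ ε₀`, and `κⁿ(Dᵢ) ∩ Dᵢ = ∅` for
`i = 1, …, M`. -/
theorem exists_open_cover_avoiding_periodic_points
    (κ : Torus2 → Torus2) (hκ : Continuous κ) (n : ℕ) (hn : 1 ≤ n)
    (hF : (volume : Measure Torus2) {x : Torus2 | κ^[n] x = x} = 0) :
    ∀ ε₀ : ℝ≥0∞, 0 < ε₀ →
      ∃ (M : ℕ) (D : ℕ → Set Torus2),
        (∀ i ≤ M, IsOpen (D i)) ∧
        (⋃ i ≤ M, D i) = Set.univ ∧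
        {x : Torus2 | κ^[n] x = x} ⊆ D 0 ∧
        (volume : Measure Torus2) (D 0) ≤ ε₀ ∧
        ∀ i, 1 ≤ i → i ≤ M → (κ^[n] '' D i) ∩ D i = ∅ :=
  exists_open_cover_avoiding_periodic_points_general κ hκ n hF
end

section
/- (Counting lemma from partial-sum majorization.) Let N ∈ ℕ and let u, v : Fin N → ℝ be nonincreasing sequences such that ∑_{i<k} u i ≤ ∑_{i<k} v i for every k ≤ N, and suppose v i ≤ V for all i. Let E ∈ ℝ and 0 ≤ γ < δ. Then (δ − γ) · #{i : u i > E + δ} ≤ (V − E − γ) · #{i : v i > E + γ}. -/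
/-
Let `A = {i | E + δ < u i}`; since `u` is antitone, `A` is the initial segment of length
`m = #A`, so the majorization at `k = m` gives `m (E + δ) ≤ ∑_{A} u ≤ ∑_{A} v`. Bounding `v i`
by `V` on `B = {i | E + γ < v i}` and by `E + γ` off `B` gives
`∑_{A} v ≤ m (E + γ) + (V - E - γ) #B`.
-/

open Finset

lemma Fin.mem_iff_val_lt_card_of_isLowerSet {N : ℕ} {s : Finset (Fin N)}
    (hs : IsLowerSet (s : Set (Fin N))) (i : Fin N) : i ∈ s ↔ (i : ℕ) < #s := by
  constructor
  · intro hi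
    have := card_le_card fun j hj => hs (mem_Iic.mp hj) hi
    rw [Fin.card_Iic] at this
    omega
  · intro hi
    by_contra hi'
    have := card_le_card fun j (hj : j ∈ s) =>
      mem_Iio.mpr <| lt_of_not_ge fun hij => hi' (hs hij hj)
    rw [Fin.card_Iio] at this
    omega

lemma Antitone.filter_lt_eq_filter_val_lt_card {N : ℕ} {β : Type*} [Preorder β] [DecidableLT β]
    {u : Fin N → β} (hu : Antitone u) (c : β) :
    univ.filter (fun i => c < u i) =
      univ.filter (fun i : Fin N => (i : ℕ) < #(univ.filter fun i => c < u i)) := by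
  have hlower : IsLowerSet ((univ.filter fun i => c < u i : Finset (Fin N)) : Set (Fin N)) := by
    intro j k hkj hj
    simp only [coe_filter, mem_univ, true_and, Set.mem_ofPred_eq] at hj ⊢
    exact hj.trans_le (hu hkj)
  ext i
  simpa only [mem_filter, mem_univ, true_and] using Fin.mem_iff_val_lt_card_of_isLowerSet hlower i

lemma Finset.sum_le_card_mul_add_mul_card_filter_lt {ι : Type*} [Fintype ι] (s : Finset ι)
    {v : ι → ℝ} {V : ℝ} (hV : ∀ i, v i ≤ V) (a : ℝ) :
    ∑ i ∈ s, v i ≤ #s * a + (V - a) * #(univ.filter fun i => a < v i) := by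
  let excess : ι → ℝ := fun i => if a < v i then V - a else 0
  have hexcess_nonneg : ∀ i, 0 ≤ excess i := fun i => by
    by_cases hi : a < v i <;> simp only [excess, hi, if_true, if_false] <;> linarith [hV i]
  have hpointwise : ∀ i, v i ≤ a + excess i := fun i => by
    by_cases hi : a < v i <;> simp only [excess, hi, if_true, if_false] <;> linarith [hV i]
  calc ∑ i ∈ s, v i ≤ ∑ i ∈ s, (a + excess i) := sum_le_sum fun i _ => hpointwise i
    _ ≤ #s * a + ∑ i, excess i := by
        rw [sum_add_distrib, sum_const, nsmul_eq_mul]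
        exact add_le_add_right (sum_le_univ_sum_of_nonneg hexcess_nonneg) _
    _ = #s * a + (V - a) * #(univ.filter fun i => a < v i) := by
        rw [← sum_filter, sum_const, nsmul_eq_mul, mul_comm (#s : ℝ), mul_comm (V - a)]

theorem counting_lemma_of_partial_sums_general (N : ℕ) (u v : Fin N → ℝ)
    (hu : Antitone u)
    (huv : ∀ k : ℕ, k ≤ N →
      (∑ i ∈ Finset.univ.filter (fun i : Fin N => (i : ℕ) < k), u i)
        ≤ ∑ i ∈ Finset.univ.filter (fun i : Fin N => (i : ℕ) < k), v i)
    (V : ℝ) (hV : ∀ i, v i ≤ V)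
    (E γ δ : ℝ) :
    (δ - γ) * ((Finset.univ.filter (fun i : Fin N => E + δ < u i)).card : ℝ)
      ≤ (V - E - γ) * ((Finset.univ.filter (fun i : Fin N => E + γ < v i)).card : ℝ) := by
  have hA := hu.filter_lt_eq_filter_val_lt_card (E + δ)
  set A := univ.filter fun i : Fin N => E + δ < u i
  have hlower : #A * (E + δ) ≤ ∑ i ∈ A, u i := by
    simpa only [nsmul_eq_mul] using
      card_nsmul_le_sum A u (E + δ) fun i hi => (mem_filter.mp hi).2.le
  have hmajor : ∑ i ∈ A, u i ≤ ∑ i ∈ A, v i := by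
    rw [hA]
    exact huv _ (card_le_univ A |>.trans_eq (Fintype.card_fin N))
  have hupper := A.sum_le_card_mul_add_mul_card_filter_lt hV (E + γ)
  rw [sub_sub]
  linarith

/-- **Counting lemma from partial-sum majorization.** If `u, v : Fin N → ℝ` are
nonincreasing, the partial sums of `u` are dominated by those of `v`, and `v ≤ V`,
then for `0 ≤ γ < δ` and any `E`:
`(δ - γ) · #{i | u i > E + δ} ≤ (V - E - γ) · #{i | v i > E + γ}`. -/
theorem counting_lemma_of_partial_sums (N : ℕ) (u v : Fin N → ℝ)
    (hu : Antitone u) (hv : Antitone v)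
    (huv : ∀ k : ℕ, k ≤ N →
      (∑ i ∈ Finset.univ.filter (fun i : Fin N => (i : ℕ) < k), u i)
        ≤ ∑ i ∈ Finset.univ.filter (fun i : Fin N => (i : ℕ) < k), v i)
    (V : ℝ) (hV : ∀ i, v i ≤ V)
    (E γ δ : ℝ) (hγ : 0 ≤ γ) (hγδ : γ < δ) :
    (δ - γ) * ((Finset.univ.filter (fun i : Fin N => E + δ < u i)).card : ℝ)
      ≤ (V - E - γ) * ((Finset.univ.filter (fun i : Fin N => E + γ < v i)).card : ℝ) :=
  counting_lemma_of_partial_sums_general N u v hu huv V hV E γ δ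
end
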